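/- arXiv:2403.20313 — 8 statements merged into one kernel-verified Lean document; each statement's English description precedes it below -/
import Mathlib

section
/- If R is a geometric random variable with P(R = k) = (1-p)^k p for k = 0, 1, 2, ..., where 0 < p < 1, then for every integer k ≥ 1, the conditional expectation E[1/R | R ≥ k] = (1/P(R ≥ k)) ∑_{r=k}^∞ (1/r) P(R = r) is at most p log(1/p) / (1-p). -/
/-- For a geometric r.v. with P(R = r) = (1-p)^r p,
E[1/R | R ≥ k] = (1/P(R ≥ k)) ∑_{r≥k} (1/r) P(R = r) ≤ p log(1/p)/(1-p), for k ≥ 1. -/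
theorem stmt0 (p : ℝ) (hp0 : 0 < p) (hp1 : p < 1) (k : ℕ) (hk : 1 ≤ k) :
    (1 / (1 - p) ^ k) * ∑' r : ℕ, (if k ≤ r then (1 / (r : ℝ)) * ((1 - p) ^ r * p) else 0)
      ≤ p * Real.log (1 / p) / (1 - p) := by
  set x : ℝ := 1 - p with hx
  have hx0 : 0 < x := by simp [hx]; linarith
  have hx1 : x < 1 := by simp [hx]; linarith
  have hxa : |x| < 1 := by rw [abs_of_pos hx0]; exact hx1
  -- log series
  have hlog : HasSum (fun n : ℕ => x ^ (n + 1) / (n + 1)) (Real.log (1 / p)) := by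
    have h := Real.hasSum_pow_div_log_of_abs_lt_one hxa
    have : -Real.log (1 - x) = Real.log (1 / p) := by
      rw [one_div, Real.log_inv]
      congr 1
      simp [hx]
    rwa [this] at h
  -- g series: ∑ x^j/(j+1) = log(1/p)/x
  have hg : HasSum (fun j : ℕ => x ^ j / (j + 1)) (Real.log (1 / p) / x) := by
    have h := hlog.div_const x
    have e : (fun j : ℕ => x ^ j / ((j : ℝ) + 1)) = fun i : ℕ => x ^ (i + 1) / ((i : ℝ) + 1) / x := by
      funext j
      rw [pow_succ, mul_div_right_comm, mul_div_assoc, div_self hx0.ne', mul_one]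
    rw [e]
    exact h
  -- f j = x^j/(j+k)
  set f : ℕ → ℝ := fun j => x ^ j / (j + k) with hf
  have hfnonneg : ∀ j, 0 ≤ f j := by
    intro j
    apply div_nonneg (pow_nonneg hx0.le _)
    positivity
  have hfle : ∀ j, f j ≤ x ^ j / (j + 1) := by
    intro j
    apply div_le_div_of_nonneg_left (pow_nonneg hx0.le _) (by positivity)
    have : (1 : ℝ) ≤ (k : ℝ) := by exact_mod_cast hk
    linarith
  have hfsum : Summable f := Summable.of_nonneg_of_le hfnonneg hfle hg.summable
  have hfts : ∑' j, f j ≤ Real.log (1 / p) / x :=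
    hg.tsum_eq ▸ Summable.tsum_le_tsum hfle hfsum hg.summable
  -- rewrite the main sum
  have hinj : Function.Injective (fun j : ℕ => j + k) := add_left_injective k
  have hshift : ∑' j : ℕ, (if k ≤ j + k then (1 / ((j + k : ℕ) : ℝ)) * ((1 - p) ^ (j + k) * p) else 0)
      = ∑' r : ℕ, (if k ≤ r then (1 / (r : ℝ)) * ((1 - p) ^ r * p) else 0) := by
    apply Function.Injective.tsum_eq (f := fun r : ℕ => if k ≤ r then (1 / (r : ℝ)) * ((1 - p) ^ r * p) else 0) hinj
    intro r hr
    have hkr : k ≤ r := by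
      by_contra h
      simp [h] at hr
    exact ⟨r - k, Nat.sub_add_cancel hkr⟩
  have hterm : ∀ j : ℕ, (if k ≤ j + k then (1 / ((j + k : ℕ) : ℝ)) * ((1 - p) ^ (j + k) * p) else 0)
      = p * x ^ k * f j := by
    intro j
    have hjk : k ≤ j + k := Nat.le_add_left k j
    have hjk0 : ((j : ℝ) + k) ≠ 0 := by positivity
    rw [if_pos hjk, hf]
    push_cast
    rw [← hx, pow_add]
    field_simp
  have hmain : ∑' r : ℕ, (if k ≤ r then (1 / (r : ℝ)) * ((1 - p) ^ r * p) else 0)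
      = p * x ^ k * ∑' j, f j := by
    rw [← hshift]
    simp_rw [hterm]
    exact tsum_mul_left
  rw [hmain]
  have hxk : (0 : ℝ) < x ^ k := pow_pos hx0 k
  have hsimp : 1 / x ^ k * (p * x ^ k * ∑' j, f j) = p * ∑' j, f j := by
    field_simp
  rw [hsimp]
  calc p * ∑' j, f j ≤ p * (Real.log (1 / p) / x) := by
        apply mul_le_mul_of_nonneg_left hfts hp0.le
    _ = p * Real.log (1 / p) / x := by ring
end

section
/- Let X_1, ..., X_n be i.i.d. square-integrable random variables with mean m and variance σ², x_0 ≠ 0, and 0 ≤ k ≤ l ≤ n. Define U_k^S = ∏_{i=1}^k (X_i/x_0 - 1) and U_l^S = ∏_{i=1}^l (X_i/x_0 - 1). Then Cov(U_k^S, U_l^S) = (σ²/x_0² + (m/x_0 - 1)²)^k (m/x_0 - 1)^{l-k} - (m/x_0 - 1)^{k+l}. -/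
open MeasureTheory ProbabilityTheory

lemma integral_indep_prod' {Ω : Type*} [MeasurableSpace Ω] {μ : Measure Ω}
    [IsProbabilityMeasure μ] (W : ℕ → Ω → ℝ)
    (hind : iIndepFun W μ)
    (hm : ∀ i, Measurable (W i)) (hint : ∀ i, Integrable (W i) μ) (n : ℕ) :
    Integrable (fun ω => ∏ i ∈ Finset.range n, W i ω) μ ∧
      (∫ ω, ∏ i ∈ Finset.range n, W i ω ∂μ)
        = ∏ i ∈ Finset.range n, ∫ ω, W i ω ∂μ := by
  induction n with
  | zero => simp
  | succ n ih =>
    have hI : IndepFun (∏ j ∈ Finset.range n, W j) (W n) μ :=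
      hind.indepFun_prod_range_succ hm n
    have hI' : IndepFun (fun ω => ∏ j ∈ Finset.range n, W j ω) (W n) μ := by
      convert hI using 1; ext ω; simp
    constructor
    · have := hI'.integrable_mul ih.1 (hint n)
      simpa [Finset.prod_range_succ, Pi.mul_def] using this
    · have h : (∫ ω, (∏ i ∈ Finset.range n, W i ω) * W n ω ∂μ)
          = (∫ ω, ∏ i ∈ Finset.range n, W i ω ∂μ) * ∫ ω, W n ω ∂μ :=
        hI'.integral_mul_eq_mul_integral ih.1.aestronglyMeasurable (hint n).aestronglyMeasurable
      simp_rw [Finset.prod_range_succ]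
      rw [h, ih.2]

/-- covariance of the simple product estimators
Cov(U_k^S, U_l^S) = (σ²/x₀² + (m/x₀-1)²)^k (m/x₀-1)^{l-k} - (m/x₀-1)^{k+l} for k ≤ l ≤ n. -/
theorem stmt2 {Ω : Type*} [MeasurableSpace Ω] (μ : Measure Ω) [IsProbabilityMeasure μ]
    (X : ℕ → Ω → ℝ) (m σ2 x0 : ℝ) (hx0 : x0 ≠ 0) (n k l : ℕ) (hkl : k ≤ l) (hln : l ≤ n)
    (hmeas : ∀ i, Measurable (X i))
    (hindep : iIndepFun X μ)
    (hident : ∀ i j, IdentDistrib (X i) (X j) μ μ)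
    (hL2 : ∀ i, MemLp (X i) 2 μ)
    (hmean : ∀ i, ∫ ω, X i ω ∂μ = m)
    (hvar : ∀ i, variance (X i) μ = σ2) :
    (∫ ω, (∏ i ∈ Finset.range k, (X i ω / x0 - 1))
            * (∏ i ∈ Finset.range l, (X i ω / x0 - 1)) ∂μ)
      - (∫ ω, ∏ i ∈ Finset.range k, (X i ω / x0 - 1) ∂μ)
          * (∫ ω, ∏ i ∈ Finset.range l, (X i ω / x0 - 1) ∂μ)
    = (σ2 / x0 ^ 2 + (m / x0 - 1) ^ 2) ^ k * (m / x0 - 1) ^ (l - k)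
        - (m / x0 - 1) ^ (k + l) := by
  set b : ℝ := m / x0 - 1 with hb
  set A : ℝ := σ2 / x0 ^ 2 + b ^ 2 with hA
  set Y : ℕ → Ω → ℝ := fun i ω => X i ω / x0 - 1 with hY
  -- basic facts about Y
  have hYmeas : ∀ i, Measurable (Y i) := fun i => ((hmeas i).div_const x0).sub measurable_const
  have hYL2 : ∀ i, MemLp (Y i) 2 μ := by
    intro i
    have h1 : MemLp (fun ω => x0⁻¹ * X i ω) 2 μ := (hL2 i).const_mul _
    have h2 : MemLp (fun ω => x0⁻¹ * X i ω - 1) 2 μ := h1.sub (memLp_const 1)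
    convert h2 using 2 with ω
    simp [hY, div_eq_inv_mul]
  have hYint : ∀ i, Integrable (Y i) μ := fun i => (hYL2 i).integrable one_le_two
  have hYsqint : ∀ i, Integrable (fun ω => Y i ω ^ 2) μ := fun i => (hYL2 i).integrable_sq
  have hXint : ∀ i, Integrable (X i) μ := fun i => (hL2 i).integrable one_le_two
  have hYmean : ∀ i, ∫ ω, Y i ω ∂μ = b := by
    intro i
    rw [show Y i = fun ω => X i ω / x0 - 1 from rfl]
    rw [integral_sub ((hXint i).div_const x0) (integrable_const 1)]
    simp [integral_div, hmean i, hb]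
  have hYsqmean : ∀ i, ∫ ω, Y i ω ^ 2 ∂μ = A := by
    intro i
    have hX2 : ∫ ω, X i ω ^ 2 ∂μ = σ2 + m ^ 2 := by
      have := variance_eq_sub (hL2 i)
      rw [hvar i] at this
      have hm' : μ[X i] = m := hmean i
      rw [hm'] at this
      have : σ2 = (∫ ω, X i ω ^ 2 ∂μ) - m ^ 2 := by simpa using this
      linarith
    have heq : ∀ ω, Y i ω ^ 2 = X i ω ^ 2 / x0 ^ 2 - (2 / x0) * X i ω + 1 := by
      intro ω; rw [hY]; field_simp; ring
    rw [show (fun ω => Y i ω ^ 2)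
        = fun ω => X i ω ^ 2 / x0 ^ 2 - (2 / x0) * X i ω + 1 from funext heq]
    have hi1 : Integrable (fun ω => X i ω ^ 2 / x0 ^ 2) μ := (hL2 i).integrable_sq.div_const _
    have hi2 : Integrable (fun ω => (2 / x0) * X i ω) μ := (hXint i).const_mul _
    have hi3 : Integrable (fun ω => X i ω ^ 2 / x0 ^ 2 - (2 / x0) * X i ω) μ := hi1.sub hi2
    rw [integral_add hi3 (integrable_const 1), integral_sub hi1 hi2,
      integral_div, integral_const_mul, hX2, hmean i]
    simp only [integral_const, measure_univ, probReal_univ, ENNReal.toReal_one, smul_eq_mul, one_mul]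
    rw [hA, hb]
    field_simp
    ring
  -- independence of Y and of W
  have hYind : iIndepFun Y μ := by
    have : Y = fun i => (fun x : ℝ => x / x0 - 1) ∘ X i := rfl
    rw [this]
    exact hindep.comp _ (fun i => (measurable_id.div_const x0).sub measurable_const)
  set W : ℕ → Ω → ℝ := fun i ω => if i < k then Y i ω ^ 2 else Y i ω with hW
  have hWmeas : ∀ i, Measurable (W i) := by
    intro i
    by_cases h : i < k <;> simp only [hW, h, if_true, if_false] <;>
      [exact (hYmeas i).pow_const 2; exact hYmeas i]
  have hWint : ∀ i, Integrable (W i) μ := by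
    intro i
    by_cases h : i < k <;> simp only [hW, h, if_true, if_false]
    · exact hYsqint i
    · exact hYint i
  have hWind : iIndepFun W μ := by
    have : W = fun i => (fun x : ℝ => if i < k then (x / x0 - 1) ^ 2 else (x / x0 - 1)) ∘ X i := by
      funext i ω; by_cases h : i < k <;> simp [hW, hY, h]
    rw [this]
    refine hindep.comp _ (fun i => ?_)
    by_cases h : i < k <;> simp only [h, if_true, if_false]
    · exact ((measurable_id.div_const x0).sub measurable_const).pow_const 2
    · exact (measurable_id.div_const x0).sub measurable_const
  have hWmean : ∀ i, ∫ ω, W i ω ∂μ = if i < k then A else b := by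
    intro i
    by_cases h : i < k <;> simp only [hW, h, if_true, if_false]
    · exact hYsqmean i
    · exact hYmean i
  -- pointwise product identity
  have hprod : ∀ ω, (∏ i ∈ Finset.range k, Y i ω) * (∏ i ∈ Finset.range l, Y i ω)
      = ∏ i ∈ Finset.range l, W i ω := by
    intro ω
    have hsplitY : ∏ i ∈ Finset.range l, Y i ω
        = (∏ i ∈ Finset.range k, Y i ω) * ∏ i ∈ Finset.Ico k l, Y i ω := by
      rw [Finset.range_eq_Ico, Finset.range_eq_Ico]
      exact (Finset.prod_Ico_consecutive _ (Nat.zero_le k) hkl).symm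
    have hsplitW : ∏ i ∈ Finset.range l, W i ω
        = (∏ i ∈ Finset.range k, W i ω) * ∏ i ∈ Finset.Ico k l, W i ω := by
      rw [Finset.range_eq_Ico, Finset.range_eq_Ico]
      exact (Finset.prod_Ico_consecutive _ (Nat.zero_le k) hkl).symm
    have h1 : ∏ i ∈ Finset.range k, W i ω = ∏ i ∈ Finset.range k, Y i ω ^ 2 := by
      apply Finset.prod_congr rfl; intro i hi
      simp [hW, Finset.mem_range.mp hi]
    have h2 : ∏ i ∈ Finset.Ico k l, W i ω = ∏ i ∈ Finset.Ico k l, Y i ω := by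
      apply Finset.prod_congr rfl; intro i hi
      simp [hW, not_lt.mpr (Finset.mem_Ico.mp hi).1]
    rw [hsplitY, hsplitW, h1, h2, Finset.prod_pow]
    ring
  -- integrals of the products of Y
  have hIntY := fun N => integral_indep_prod' Y hYind hYmeas hYint N
  have hIntW := integral_indep_prod' W hWind hWmeas hWint l
  have hEk : (∫ ω, ∏ i ∈ Finset.range k, Y i ω ∂μ) = b ^ k := by
    rw [(hIntY k).2]; simp [hYmean]
  have hEl : (∫ ω, ∏ i ∈ Finset.range l, Y i ω ∂μ) = b ^ l := by
    rw [(hIntY l).2]; simp [hYmean]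
  have hEW : (∫ ω, (∏ i ∈ Finset.range k, Y i ω) * (∏ i ∈ Finset.range l, Y i ω) ∂μ)
      = A ^ k * b ^ (l - k) := by
    rw [show (fun ω => (∏ i ∈ Finset.range k, Y i ω) * (∏ i ∈ Finset.range l, Y i ω))
        = fun ω => ∏ i ∈ Finset.range l, W i ω from funext hprod]
    rw [hIntW.2]
    rw [Finset.range_eq_Ico, ← Finset.prod_Ico_consecutive _ (Nat.zero_le k) hkl]
    have h1 : ∏ i ∈ Finset.Ico 0 k, (∫ ω, W i ω ∂μ) = A ^ k := by
      rw [← Finset.range_eq_Ico]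
      rw [Finset.prod_congr rfl (fun i hi => by
        rw [hWmean i, if_pos (Finset.mem_range.mp hi)])]
      simp
    have h2 : ∏ i ∈ Finset.Ico k l, (∫ ω, W i ω ∂μ) = b ^ (l - k) := by
      rw [Finset.prod_congr rfl (fun i hi => by
        rw [hWmean i, if_neg (not_lt.mpr (Finset.mem_Ico.mp hi).1)])]
      simp [Nat.card_Ico]
    rw [h1, h2]
  rw [hEW, hEk, hEl, ← pow_add]
end

section
/- Let 0 < β_0 < 1, c > 0, |γ_k| ≤ c for all k, and 0 < p < 1 - β_0². Then ∑_{k=0}^∞ γ_k² β_0^{2k} ((1-p)^{-k} - 1) + 2 ∑_{k=0}^∞ ∑_{l=k+1}^∞ |γ_k γ_l| β_0^{k+l} ((1-p)^{-k} - 1) ≤ (c² β_0² / (1 - β_0)²) · p / (1 - p - β_0²). -/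
lemma geom_tail (β : ℝ) (hb0 : 0 ≤ β) (hb1 : β < 1) (k : ℕ) :
    ∑' l : ℕ, (if k < l then β ^ l else 0) = β ^ (k + 1) * (1 - β)⁻¹ := by
  have hinj : Function.Injective (fun j : ℕ => j + (k + 1)) := add_left_injective _
  have hsupp : Function.support (fun x : ℕ => if k < x then β ^ x else 0)
      ⊆ Set.range (fun j : ℕ => j + (k + 1)) := by
    intro x hx
    have hkx : k < x := by
      by_contra hnx
      simp [hnx] at hx
    exact ⟨x - (k + 1), show x - (k + 1) + (k + 1) = x by omega⟩
  have h := Function.Injective.tsum_eq hinj hsupp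
  rw [← h]
  have hcong : ∀ j : ℕ, (if k < j + (k + 1) then β ^ (j + (k + 1)) else 0)
      = β ^ (k + 1) * β ^ j := by
    intro j
    rw [if_pos (by omega), pow_add]
    ring
  calc ∑' j : ℕ, (if k < j + (k + 1) then β ^ (j + (k+1)) else 0)
      = ∑' j : ℕ, β ^ (k + 1) * β ^ j := tsum_congr hcong
    _ = β ^ (k + 1) * ∑' j : ℕ, β ^ j := tsum_mul_left
    _ = β ^ (k + 1) * (1 - β)⁻¹ := by rw [tsum_geometric_of_lt_one hb0 hb1]

/-- upper bound in Proposition 1, including the cross terms. -/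
theorem stmt6 (β0 c p : ℝ) (γ : ℕ → ℝ) (hβ0 : 0 < β0) (hβ01 : β0 < 1) (hc : 0 < c)
    (hγ : ∀ k, |γ k| ≤ c) (hp : 0 < p) (hp1 : p < 1 - β0 ^ 2) :
    (∑' k : ℕ, (γ k) ^ 2 * β0 ^ (2 * k) * (((1 - p) ^ k)⁻¹ - 1))
      + 2 * ∑' k : ℕ, ∑' l : ℕ,
          (if k < l then |γ k * γ l| * β0 ^ (k + l) * (((1 - p) ^ k)⁻¹ - 1) else 0)
      ≤ c ^ 2 * β0 ^ 2 / (1 - β0) ^ 2 * (p / (1 - p - β0 ^ 2)) := by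
  set q : ℝ := 1 - p with hqdef
  have hβ2pos : (0:ℝ) < β0 ^ 2 := by positivity
  have hq0 : 0 < q := by simp only [hqdef]; nlinarith
  have hq1 : q < 1 := by simp only [hqdef]; linarith
  have hβ2q : β0 ^ 2 < q := by simp only [hqdef]; linarith
  have hβ1 : (0:ℝ) < 1 - β0 := by linarith
  have hb21 : β0 ^ 2 < 1 := by nlinarith
  set r : ℝ := β0 ^ 2 / q with hrdef
  have hr0 : 0 ≤ r := by positivity
  have hr1 : r < 1 := (div_lt_one hq0).mpr hβ2q
  have hrb : β0 ^ 2 ≤ r := by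
    rw [hrdef, le_div_iff₀ hq0]; nlinarith
  have ht : ∀ k : ℕ, 0 ≤ (q ^ k)⁻¹ - 1 := by
    intro k
    have h1 : (0:ℝ) < q ^ k := pow_pos hq0 k
    have h2 : q ^ k ≤ 1 := pow_le_one₀ hq0.le hq1.le
    have := (one_le_inv₀ h1).mpr h2
    linarith
  have hkey : ∀ k : ℕ, β0 ^ (2 * k) * ((q ^ k)⁻¹ - 1) = r ^ k - (β0 ^ 2) ^ k := by
    intro k
    have hrk : r ^ k = (β0 ^ 2) ^ k * (q ^ k)⁻¹ := by
      rw [hrdef, div_pow, div_eq_mul_inv]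
    rw [pow_mul, hrk]
    ring
  have hrkpos : ∀ k : ℕ, 0 ≤ r ^ k - (β0 ^ 2) ^ k := by
    intro k
    have := pow_le_pow_left₀ hβ2pos.le hrb k
    linarith
  have hsr : Summable (fun k : ℕ => r ^ k) := summable_geometric_of_lt_one hr0 hr1
  have hsb : Summable (fun k : ℕ => (β0 ^ 2) ^ k) :=
    summable_geometric_of_lt_one hβ2pos.le hb21
  have hsβ : Summable (fun k : ℕ => β0 ^ k) := summable_geometric_of_lt_one hβ0.le hβ01
  -- diagonal term
  set D : ℕ → ℝ := fun k => (γ k) ^ 2 * β0 ^ (2 * k) * ((q ^ k)⁻¹ - 1) with hDdef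
  set Dub : ℕ → ℝ := fun k => c ^ 2 * (r ^ k - (β0 ^ 2) ^ k) with hDubdef
  have hDnn : ∀ k, 0 ≤ D k := by
    intro k
    have := ht k
    simp only [hDdef]
    positivity
  have hγ2 : ∀ k, (γ k) ^ 2 ≤ c ^ 2 := by
    intro k
    have := hγ k
    nlinarith [abs_nonneg (γ k), sq_abs (γ k)]
  have hDle : ∀ k, D k ≤ Dub k := by
    intro k
    simp only [hDdef, hDubdef]
    rw [mul_assoc, hkey k]
    exact mul_le_mul_of_nonneg_right (hγ2 k) (hrkpos k)
  have hDubsum : Summable Dub := ((hsr.sub hsb).mul_left _)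
  have hDsum : Summable D := Summable.of_nonneg_of_le hDnn hDle hDubsum
  -- cross terms
  set F : ℕ → ℕ → ℝ := fun k l =>
    if k < l then |γ k * γ l| * β0 ^ (k + l) * ((q ^ k)⁻¹ - 1) else 0 with hFdef
  set G : ℕ → ℕ → ℝ := fun k l =>
    if k < l then c ^ 2 * β0 ^ (k + l) * ((q ^ k)⁻¹ - 1) else 0 with hGdef
  set I : ℕ → ℕ → ℝ := fun k l => if k < l then β0 ^ l else 0 with hIdef
  have hFnn : ∀ k l, 0 ≤ F k l := by
    intro k l
    simp only [hFdef]
    split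
    · have := ht k; positivity
    · exact le_refl 0
  have hFG : ∀ k l, F k l ≤ G k l := by
    intro k l
    simp only [hFdef, hGdef]
    split
    · have h1 : |γ k * γ l| ≤ c ^ 2 := by
        rw [abs_mul]
        calc |γ k| * |γ l| ≤ c * c :=
          mul_le_mul (hγ k) (hγ l) (abs_nonneg _) hc.le
        _ = c ^ 2 := by ring
      have h2 : (0:ℝ) ≤ β0 ^ (k + l) * ((q ^ k)⁻¹ - 1) := by
        have := ht k; positivity
      calc |γ k * γ l| * β0 ^ (k + l) * ((q ^ k)⁻¹ - 1)
          = |γ k * γ l| * (β0 ^ (k + l) * ((q ^ k)⁻¹ - 1)) := by ring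
        _ ≤ c ^ 2 * (β0 ^ (k + l) * ((q ^ k)⁻¹ - 1)) :=
            mul_le_mul_of_nonneg_right h1 h2
        _ = c ^ 2 * β0 ^ (k + l) * ((q ^ k)⁻¹ - 1) := by ring
    · exact le_refl 0
  have hIsum : ∀ k, Summable (I k) := by
    intro k
    apply Summable.of_nonneg_of_le _ _ hsβ
    · intro l
      simp only [hIdef]
      split
      · positivity
      · exact le_refl 0
    · intro l
      simp only [hIdef]
      split
      · exact le_refl _
      · positivity
  have hGrepr : ∀ k, G k = fun l => (c ^ 2 * ((q ^ k)⁻¹ - 1) * β0 ^ k) * I k l := by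
    intro k
    funext l
    simp only [hGdef, hIdef]
    split
    · rw [pow_add]; ring
    · ring
  have hGsum : ∀ k, Summable (G k) := by
    intro k
    rw [hGrepr k]
    exact (hIsum k).mul_left _
  have hFsum : ∀ k, Summable (F k) :=
    fun k => Summable.of_nonneg_of_le (hFnn k) (hFG k) (hGsum k)
  set Cub : ℕ → ℝ := fun k => (c ^ 2 * β0 * (1 - β0)⁻¹) * (r ^ k - (β0 ^ 2) ^ k)
    with hCubdef
  have hGtsum : ∀ k, ∑' l, G k l = Cub k := by
    intro k
    rw [hGrepr k]
    rw [tsum_mul_left]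
    have hIt : ∑' l, I k l = β0 ^ (k + 1) * (1 - β0)⁻¹ := geom_tail β0 hβ0.le hβ01 k
    rw [hIt]
    simp only [hCubdef]
    rw [← hkey k]
    have hpow : β0 ^ k * β0 ^ (k + 1) = β0 * β0 ^ (2 * k) := by
      rw [← pow_add]
      have h2k : k + (k + 1) = 2 * k + 1 := by omega
      rw [h2k, pow_succ]
      ring
    linear_combination c ^ 2 * ((q ^ k)⁻¹ - 1) * (1 - β0)⁻¹ * hpow
  have hCle : ∀ k, ∑' l, F k l ≤ Cub k := by
    intro k
    rw [← hGtsum k]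
    exact Summable.tsum_le_tsum (hFG k) (hFsum k) (hGsum k)
  have hCnn : ∀ k, 0 ≤ ∑' l, F k l := fun k => tsum_nonneg (hFnn k)
  have hCubsum : Summable Cub := ((hsr.sub hsb).mul_left _)
  have hCsum : Summable (fun k => ∑' l, F k l) :=
    Summable.of_nonneg_of_le hCnn hCle hCubsum
  -- geometric sums
  have hSr : ∑' k : ℕ, r ^ k = (1 - r)⁻¹ := tsum_geometric_of_lt_one hr0 hr1
  have hSb : ∑' k : ℕ, (β0 ^ 2) ^ k = (1 - β0 ^ 2)⁻¹ :=
    tsum_geometric_of_lt_one hβ2pos.le hb21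
  have hDubtsum : ∑' k, Dub k = c ^ 2 * ((1 - r)⁻¹ - (1 - β0 ^ 2)⁻¹) := by
    simp only [hDubdef]
    rw [tsum_mul_left, Summable.tsum_sub hsr hsb, hSr, hSb]
  have hCubtsum : ∑' k, Cub k
      = (c ^ 2 * β0 * (1 - β0)⁻¹) * ((1 - r)⁻¹ - (1 - β0 ^ 2)⁻¹) := by
    simp only [hCubdef]
    rw [tsum_mul_left, Summable.tsum_sub hsr hsb, hSr, hSb]
  have hmain : (∑' k, D k) + 2 * ∑' k, ∑' l, F k l
      ≤ c ^ 2 * β0 ^ 2 / (1 - β0) ^ 2 * (p / (q - β0 ^ 2)) := by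
    have h1 : (∑' k, D k) ≤ ∑' k, Dub k := Summable.tsum_le_tsum hDle hDsum hDubsum
    have h2 : (∑' k, ∑' l, F k l) ≤ ∑' k, Cub k := Summable.tsum_le_tsum hCle hCsum hCubsum
    have h3 : (∑' k, D k) + 2 * ∑' k, ∑' l, F k l ≤ (∑' k, Dub k) + 2 * ∑' k, Cub k := by
      linarith
    refine h3.trans (le_of_eq ?_)
    rw [hDubtsum, hCubtsum, hrdef, hqdef]
    have hne1 : (1:ℝ) - β0 ≠ 0 := ne_of_gt hβ1
    have hne2 : (1:ℝ) - β0 ^ 2 ≠ 0 := by nlinarith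
    have hne3 : (1:ℝ) - p ≠ 0 := by rw [hqdef] at hq0; linarith
    have hne4 : (1:ℝ) - p - β0 ^ 2 ≠ 0 := by rw [hqdef] at hβ2q; intro h; nlinarith
    have hne5 : (1:ℝ) - β0 ^ 2 / (1 - p) ≠ 0 := by
      have hq0' : (0:ℝ) < 1 - p := hq0
      have hlt : β0 ^ 2 / (1 - p) < 1 := (div_lt_one hq0').mpr (by nlinarith)
      intro h; linarith
    field_simp
    ring
  exact hmain
end

section
/- Let 0 ≤ β < 1, c > 0, |γ_k| ≤ c for all k ≥ 0, and let R be geometric with P(R ≥ k) = (1-p)^k where 0 < p < 1 - β². Then ∑_{k=0}^∞ γ_k² β^{2k} / P(R ≥ k) + 2 ∑_{k=0}^∞ ∑_{l=k+1}^∞ |γ_k γ_l| β^{k+l} / P(R ≥ k) ≤ c² ((1+β)/(1-β)) · (1-p)/(1-p-β²). -/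
/-- key L² bound for the simple sum estimator. -/
theorem stmt8 (β c p : ℝ) (γ : ℕ → ℝ) (hβ0 : 0 ≤ β) (hβ1 : β < 1) (hc : 0 < c)
    (hγ : ∀ k, |γ k| ≤ c) (hp : 0 < p) (hp1 : p < 1 - β ^ 2) :
    (∑' k : ℕ, (γ k) ^ 2 * β ^ (2 * k) / (1 - p) ^ k)
      + 2 * ∑' k : ℕ, ∑' l : ℕ,
          (if k < l then |γ k * γ l| * β ^ (k + l) / (1 - p) ^ k else 0)
      ≤ c ^ 2 * ((1 + β) / (1 - β)) * ((1 - p) / (1 - p - β ^ 2)) := by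
  set q : ℝ := 1 - p with hqdef
  have hβ2q : β ^ 2 < q := by linarith
  have hq0 : (0:ℝ) < q := lt_of_le_of_lt (sq_nonneg β) hβ2q
  have h1β : (0:ℝ) < 1 - β := by linarith
  have hr0 : 0 ≤ β ^ 2 / q := by positivity
  have hr1 : β ^ 2 / q < 1 := (div_lt_one hq0).2 hβ2q
  have hgeo : Summable (fun k : ℕ => (β ^ 2 / q) ^ k) :=
    summable_geometric_of_lt_one hr0 hr1
  have hβgeo : Summable (fun l : ℕ => β ^ l) :=
    summable_geometric_of_lt_one hβ0 hβ1
  have hγsq : ∀ k, (γ k) ^ 2 ≤ c ^ 2 := by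
    intro k
    have := hγ k
    nlinarith [abs_nonneg (γ k), sq_abs (γ k)]
  -- pointwise bound for the first series
  have hf1 : ∀ k : ℕ, (γ k) ^ 2 * β ^ (2 * k) / q ^ k ≤ c ^ 2 * (β ^ 2 / q) ^ k := by
    intro k
    have h1 : (β ^ 2 / q) ^ k = β ^ (2 * k) / q ^ k := by
      rw [div_pow, ← pow_mul]
    rw [h1, ← mul_div_assoc]
    gcongr ?_ / q ^ k
    exact mul_le_mul_of_nonneg_right (hγsq k) (pow_nonneg hβ0 _)
  have hf1nn : ∀ k : ℕ, 0 ≤ (γ k) ^ 2 * β ^ (2 * k) / q ^ k := by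
    intro k; positivity
  have hS1sum : Summable (fun k : ℕ => (γ k) ^ 2 * β ^ (2 * k) / q ^ k) :=
    Summable.of_nonneg_of_le hf1nn hf1 (hgeo.mul_left _)
  have hS1 : (∑' k : ℕ, (γ k) ^ 2 * β ^ (2 * k) / q ^ k)
      ≤ c ^ 2 * (q / (q - β ^ 2)) := by
    have := Summable.tsum_le_tsum hf1 hS1sum (hgeo.mul_left (c ^ 2))
    rw [tsum_mul_left, tsum_geometric_of_lt_one hr0 hr1] at this
    have heq : (1 - β ^ 2 / q)⁻¹ = q / (q - β ^ 2) := by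
      rw [inv_eq_one_div]; field_simp
    rw [heq] at this
    exact this
  -- inner tail geometric sum
  have htail : ∀ k : ℕ, (∑' l : ℕ, (if k < l then β ^ l else 0))
      = β ^ (k + 1) * (1 - β)⁻¹ := by
    intro k
    have hsum : Summable (fun l : ℕ => (if k < l then β ^ l else 0)) := by
      apply Summable.of_nonneg_of_le (fun l => by positivity) _ hβgeo
      intro l
      split <;> simp [pow_nonneg hβ0]
    have hkey := Summable.sum_add_tsum_nat_add (f := fun l : ℕ => (if k < l then β ^ l else 0))
      (k + 1) hsum
    have h1 : (∑ i ∈ Finset.range (k + 1), (if k < i then β ^ i else 0)) = 0 := by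
      apply Finset.sum_eq_zero
      intro i hi
      simp only [Finset.mem_range] at hi
      rw [if_neg (by omega)]
    have h2 : (∑' i : ℕ, (if k < i + (k + 1) then β ^ (i + (k + 1)) else 0))
        = β ^ (k + 1) * (1 - β)⁻¹ := by
      have : ∀ i : ℕ, (if k < i + (k + 1) then β ^ (i + (k + 1)) else 0)
          = β ^ (k + 1) * β ^ i := by
        intro i
        rw [if_pos (by omega), pow_add]; ring
      rw [tsum_congr this, tsum_mul_left, tsum_geometric_of_lt_one hβ0 hβ1]
    rw [h1, h2, zero_add] at hkey
    exact hkey.symm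
  -- bound inner sums
  have hFnn : ∀ k l : ℕ, 0 ≤ (if k < l then |γ k * γ l| * β ^ (k + l) / q ^ k else 0) := by
    intro k l; split <;> positivity
  have hFle : ∀ k l : ℕ, (if k < l then |γ k * γ l| * β ^ (k + l) / q ^ k else 0)
      ≤ (c ^ 2 * β ^ k / q ^ k) * (if k < l then β ^ l else 0) := by
    intro k l
    split
    · have hb : |γ k| * |γ l| ≤ c ^ 2 := by
        calc |γ k| * |γ l| ≤ c * c := mul_le_mul (hγ k) (hγ l) (abs_nonneg _) hc.le
          _ = c ^ 2 := (sq c).symm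
      have hrhs : c ^ 2 * β ^ k / q ^ k * β ^ l = (c ^ 2 * (β ^ k * β ^ l)) / q ^ k := by
        ring
      rw [abs_mul, pow_add, hrhs]
      gcongr ?_ / q ^ k
      exact mul_le_mul_of_nonneg_right hb (by positivity)
    · simp
  have hFsummable : ∀ k : ℕ, Summable
      (fun l : ℕ => (if k < l then |γ k * γ l| * β ^ (k + l) / q ^ k else 0)) := by
    intro k
    apply Summable.of_nonneg_of_le (hFnn k) (hFle k)
    apply Summable.mul_left
    apply Summable.of_nonneg_of_le (fun l => by positivity) _ hβgeo
    intro l; split <;> simp [pow_nonneg hβ0]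
  have hGsummable : ∀ k : ℕ, Summable (fun l : ℕ => (c ^ 2 * β ^ k / q ^ k) * (if k < l then β ^ l else 0)) := by
    intro k
    apply Summable.mul_left
    apply Summable.of_nonneg_of_le (fun l => by positivity) _ hβgeo
    intro l; split <;> simp [pow_nonneg hβ0]
  have hinner : ∀ k : ℕ, (∑' l : ℕ, (if k < l then |γ k * γ l| * β ^ (k + l) / q ^ k else 0))
      ≤ (c ^ 2 * β * (1 - β)⁻¹) * (β ^ 2 / q) ^ k := by
    intro k
    have h1 := Summable.tsum_le_tsum (hFle k) (hFsummable k) (hGsummable k)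
    rw [tsum_mul_left, htail k] at h1
    refine h1.trans_eq ?_
    rw [div_pow, ← pow_mul]
    field_simp
    ring
  have hinnernn : ∀ k : ℕ, 0 ≤ (∑' l : ℕ, (if k < l then |γ k * γ l| * β ^ (k + l) / q ^ k else 0)) :=
    fun k => tsum_nonneg (hFnn k)
  have hS2sum : Summable (fun k : ℕ => (∑' l : ℕ, (if k < l then |γ k * γ l| * β ^ (k + l) / q ^ k else 0))) :=
    Summable.of_nonneg_of_le hinnernn hinner (hgeo.mul_left _)
  have hS2 : (∑' k : ℕ, ∑' l : ℕ, (if k < l then |γ k * γ l| * β ^ (k + l) / q ^ k else 0))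
      ≤ (c ^ 2 * β * (1 - β)⁻¹) * (q / (q - β ^ 2)) := by
    have := Summable.tsum_le_tsum hinner hS2sum (hgeo.mul_left _)
    rw [tsum_mul_left, tsum_geometric_of_lt_one hr0 hr1] at this
    have heq : (1 - β ^ 2 / q)⁻¹ = q / (q - β ^ 2) := by
      rw [inv_eq_one_div]; field_simp
    rw [heq] at this
    exact this
  have hfinal : c ^ 2 * (q / (q - β ^ 2)) + 2 * ((c ^ 2 * β * (1 - β)⁻¹) * (q / (q - β ^ 2)))
      = c ^ 2 * ((1 + β) / (1 - β)) * (q / (q - β ^ 2)) := by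
    have hqb : q - β ^ 2 ≠ 0 := ne_of_gt (by linarith)
    field_simp
    ring
  calc (∑' k : ℕ, (γ k) ^ 2 * β ^ (2 * k) / q ^ k)
      + 2 * ∑' k : ℕ, ∑' l : ℕ, (if k < l then |γ k * γ l| * β ^ (k + l) / q ^ k else 0)
      ≤ c ^ 2 * (q / (q - β ^ 2)) + 2 * ((c ^ 2 * β * (1 - β)⁻¹) * (q / (q - β ^ 2))) := by
        have := hS2
        linarith
    _ = c ^ 2 * ((1 + β) / (1 - β)) * (q / (q - β ^ 2)) := hfinal
end

section
/- Let f(x) = 1/x with Taylor coefficients γ_k = (-1)^{k-1} (in the expansion 1/m = (1/x_0) ∑_{k≥0} (-1)^k (m/x_0 - 1)^k, up to sign convention), m > 0, x_0 > m/2, β_0 = |m/x_0 - 1| < 1, and β² = σ²/x_0² + β_0² < 1. Then ∑_{k=0}^∞ (β^{2k} - β_0^{2k}) + 2 ∑_{k=0}^∞ (-1)^{k-1} (β^{2k}(m/x_0 - 1)^{-k} - (m/x_0 - 1)^k) ∑_{l=k+1}^∞ (-1)^{l-1} (m/x_0 - 1)^l = (2x_0/m - 1)(1/(1-β²) - 1/(1-β_0²)).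 -/
lemma my_inner_sum (r : ℝ) (hr : |r| < 1) (k : ℕ) :
    ∑' l : ℕ, (if k < l then (-1:ℝ)^(l+1) * r ^ l else 0)
      = (-1)^k * r^(k+1) / (1 + r) := by
  set f : ℕ → ℝ := fun l => if k < l then (-1:ℝ)^(l+1) * r ^ l else 0 with hf
  have hs : |(-r)| < 1 := by rwa [abs_neg]
  have h1 : HasSum (fun n : ℕ => (-(-r)^(k+1)) * (-r)^n)
      ((-(-r)^(k+1)) * (1 - (-r))⁻¹) :=
    (hasSum_geometric_of_abs_lt_one hs).mul_left _
  have h2 : HasSum (fun n : ℕ => f (n + (k+1))) ((-(-r)^(k+1)) * (1 - (-r))⁻¹) := by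
    convert h1 using 2 with n
    rw [hf]
    simp only [if_pos (by omega : k < n + (k+1))]
    rw [show (-(-r)^(k+1)) * (-r)^n = -(-r)^(k+1+n) by rw [pow_add]; ring,
      neg_pow r (k+1+n), show n+(k+1) = k+1+n by ring, pow_succ]
    ring
  have h3 := (hasSum_nat_add_iff (k+1)).mp h2
  have h4 : ∑ i ∈ Finset.range (k+1), f i = 0 := by
    apply Finset.sum_eq_zero
    intro i hi
    rw [hf]
    simp only [if_neg (by simp at hi; omega : ¬ k < i)]
  rw [h4, add_zero] at h3
  rw [h3.tsum_eq, neg_pow r (k+1), pow_succ (-1:ℝ) k]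
  have : (1 : ℝ) - -r = 1 + r := by ring
  rw [this, div_eq_mul_inv]
  ring

/-- the limiting expected conditional variance of the simple estimator
for f(x) = 1/x equals (2x₀/m - 1)(1/(1-β²) - 1/(1-β₀²)). Here (-1)^{k-1} is written
(-1)^{k+1} and the exponent -k is an integer power. -/
theorem stmt9 (m x0 σ2 β β0 : ℝ) (hm : 0 < m) (hx0 : m / 2 < x0)
    (hβ0 : β0 = |m / x0 - 1|) (hβ01 : β0 < 1)
    (hβ : β ^ 2 = σ2 / x0 ^ 2 + β0 ^ 2) (hβ1 : β ^ 2 < 1) :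
    (∑' k : ℕ, (β ^ (2 * k) - β0 ^ (2 * k)))
      + 2 * ∑' k : ℕ, ((-1 : ℝ) ^ (k + 1)
            * (β ^ (2 * k) * (m / x0 - 1) ^ (-(k : ℤ)) - (m / x0 - 1) ^ k)
            * ∑' l : ℕ, (if k < l then (-1 : ℝ) ^ (l + 1) * (m / x0 - 1) ^ l else 0))
      = (2 * x0 / m - 1) * (1 / (1 - β ^ 2) - 1 / (1 - β0 ^ 2)) := by
  set t : ℝ := m / x0 - 1 with hT
  have hx0pos : 0 < x0 := lt_trans (by positivity) hx0
  have ht : |t| < 1 := hβ0 ▸ hβ01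
  have h1t : 1 + t = m / x0 := by rw [hT]; ring
  have hb02 : β0 ^ 2 = t ^ 2 := by rw [hβ0, sq_abs]
  have hb2nonneg : (0:ℝ) ≤ β ^ 2 := sq_nonneg β
  have ht2lt : t ^ 2 < 1 := by nlinarith [sq_abs t, abs_nonneg t]
  have ht2nonneg : (0:ℝ) ≤ t ^ 2 := sq_nonneg t
  have hne1 : (1:ℝ) - β ^ 2 ≠ 0 := by nlinarith
  have hne2 : (1:ℝ) - t ^ 2 ≠ 0 := by nlinarith
  have sumβ : Summable (fun k : ℕ => (β ^ 2) ^ k) :=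
    summable_geometric_of_lt_one hb2nonneg hβ1
  have sumt : Summable (fun k : ℕ => (t ^ 2) ^ k) :=
    summable_geometric_of_lt_one ht2nonneg ht2lt
  have S1 : (∑' k : ℕ, (β ^ (2 * k) - β0 ^ (2 * k)))
      = 1 / (1 - β ^ 2) - 1 / (1 - t ^ 2) := by
    have e : ∀ k : ℕ, β ^ (2 * k) - β0 ^ (2 * k) = (β ^ 2) ^ k - (t ^ 2) ^ k := by
      intro k
      rw [pow_mul, pow_mul, hb02]
    rw [tsum_congr e, Summable.tsum_sub sumβ sumt,
      tsum_geometric_of_lt_one hb2nonneg hβ1,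
      tsum_geometric_of_lt_one ht2nonneg ht2lt, one_div, one_div]
  by_cases htz : t = 0
  · have hS2 : ∑' k : ℕ, ((-1 : ℝ) ^ (k + 1)
        * (β ^ (2 * k) * t ^ (-(k : ℤ)) - t ^ k)
        * ∑' l : ℕ, (if k < l then (-1 : ℝ) ^ (l + 1) * t ^ l else 0)) = 0 := by
      have : ∀ k : ℕ, ((-1 : ℝ) ^ (k + 1)
          * (β ^ (2 * k) * t ^ (-(k : ℤ)) - t ^ k)
          * ∑' l : ℕ, (if k < l then (-1 : ℝ) ^ (l + 1) * t ^ l else 0)) = 0 := by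
        intro k
        have hin : ∑' l : ℕ, (if k < l then (-1 : ℝ) ^ (l + 1) * t ^ l else 0) = 0 := by
          convert tsum_zero with l
          split_ifs with h
          · rw [htz, zero_pow (by omega : l ≠ 0), mul_zero]
          · rfl
        rw [hin, mul_zero]
      rw [tsum_congr this, tsum_zero]
    rw [S1, hS2, hb02]
    have hmx : m = x0 := by
      have : m / x0 = 1 := by rw [← h1t, htz]; ring
      field_simp at this
      linarith
    rw [htz, hmx]
    field_simp
    ring
  · have hterm : ∀ k : ℕ, ((-1 : ℝ) ^ (k + 1)
        * (β ^ (2 * k) * t ^ (-(k : ℤ)) - t ^ k)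
        * ∑' l : ℕ, (if k < l then (-1 : ℝ) ^ (l + 1) * t ^ l else 0))
        = (t / (1 + t)) * ((t ^ 2) ^ k - (β ^ 2) ^ k) := by
      intro k
      rw [my_inner_sum t ht k]
      have e0 : (t:ℝ) ^ (-(k : ℤ)) = (t ^ k)⁻¹ := by
        rw [zpow_neg, zpow_natCast]
      have hsign : ((-1:ℝ)) ^ (k+1) * (-1) ^ k = -1 := by
        rw [pow_succ, mul_comm ((-1:ℝ)^k) (-1), mul_assoc, ← mul_pow]
        norm_num
      have e2 : (t ^ k)⁻¹ * t ^ (k+1) = t := by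
        rw [pow_succ, ← mul_assoc, inv_mul_cancel₀ (pow_ne_zero k htz), one_mul]
      have e3 : t ^ k * t ^ (k+1) = (t ^ 2) ^ k * t := by
        rw [← pow_add, ← pow_mul, ← pow_succ]
        congr 1
        omega
      rw [e0, pow_mul]
      calc (-1:ℝ) ^ (k + 1) * ((β^2)^k * (t ^ k)⁻¹ - t ^ k) * ((-1) ^ k * t ^ (k+1) / (1 + t))
          = ((-1:ℝ)^(k+1) * (-1)^k) * ((β^2)^k * ((t ^ k)⁻¹ * t^(k+1)) - t^k * t^(k+1)) / (1+t) := by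
            ring
        _ = (t / (1 + t)) * ((t ^ 2) ^ k - (β ^ 2) ^ k) := by
            rw [hsign, e2, e3]; ring
    have hS2 : ∑' k : ℕ, ((-1 : ℝ) ^ (k + 1)
        * (β ^ (2 * k) * t ^ (-(k : ℤ)) - t ^ k)
        * ∑' l : ℕ, (if k < l then (-1 : ℝ) ^ (l + 1) * t ^ l else 0))
        = (t / (1 + t)) * (1 / (1 - t ^ 2) - 1 / (1 - β ^ 2)) := by
      rw [tsum_congr hterm, tsum_mul_left, Summable.tsum_sub sumt sumβ,
        tsum_geometric_of_lt_one ht2nonneg ht2lt,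
        tsum_geometric_of_lt_one hb2nonneg hβ1, one_div, one_div]
    rw [S1, hS2, hb02, h1t]
    have hmne : m ≠ 0 := ne_of_gt hm
    have hx0ne : x0 ≠ 0 := ne_of_gt hx0pos
    rw [hT]
    field_simp
    ring
end

section
/- Under the setup of the cycling estimator with r ≥ l + k, l ≥ k ≥ 1, ρ = 1 + σ²/(m - x_0)² > 1, and β_0 = |m/x_0 - 1|, the covariance satisfies Cov(U_{r,k}^C, U_{r,l}^C) < β_0^{l+k} ρ^k (l + k)/r. -/
open MeasureTheory ProbabilityTheory



theorem aux_prod_integral {Ω : Type*} [MeasurableSpace Ω] {μ : Measure Ω} [IsProbabilityMeasure μ]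
    (Z : ℕ → Ω → ℝ) (hZmeas : ∀ i, Measurable (Z i))
    (hZindep : iIndepFun Z μ)
    (S : Finset ℕ) (hint : ∀ i ∈ S, Integrable (Z i) μ) :
    Integrable (fun ω => ∏ i ∈ S, Z i ω) μ ∧
      ∫ ω, ∏ i ∈ S, Z i ω ∂μ = ∏ i ∈ S, ∫ ω, Z i ω ∂μ := by
  classical
  revert hint
  induction S using Finset.induction_on with
  | empty => intro _; simp
  | @insert a s ha ih =>
    intro hint
    have hIa : Integrable (Z a) μ := hint a (Finset.mem_insert_self a s)
    obtain ⟨hI, hE⟩ := ih (fun i hi => hint i (Finset.mem_insert_of_mem hi))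
    have hfeq : (fun ω => ∏ j ∈ s, Z j ω) * Z a = fun ω => ∏ i ∈ insert a s, Z i ω := by
      funext ω; simp only [Pi.mul_apply, Finset.prod_insert ha]; ring
    have hindepFun : IndepFun (fun ω => ∏ j ∈ s, Z j ω) (Z a) μ := by
      have h := ProbabilityTheory.iIndepFun.indepFun_finsetProd_of_notMem hZindep hZmeas ha
      have h2 : (∏ j ∈ s, Z j) = fun ω => ∏ j ∈ s, Z j ω := by
        funext ω; simp [Finset.prod_apply]
      rwa [h2] at h
    have hmul : Integrable ((fun ω => ∏ j ∈ s, Z j ω) * Z a) μ :=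
      hindepFun.integrable_mul hI hIa
    have hEab := hindepFun.integral_mul_eq_mul_integral hI.aestronglyMeasurable hIa.aestronglyMeasurable
    rw [hfeq] at hmul hEab
    refine ⟨hmul, ?_⟩
    rw [hEab, hE, Finset.prod_insert ha]; ring

theorem pair_expect {Ω : Type*} [MeasurableSpace Ω] {μ : Measure Ω} [IsProbabilityMeasure μ]
    (Y : ℕ → Ω → ℝ) (hYmeas : ∀ i, Measurable (Y i))
    (hYindep : iIndepFun Y μ)
    (mt c2 : ℝ) (hm1 : ∀ i, ∫ ω, Y i ω ∂μ = mt) (hm2 : ∀ i, ∫ ω, Y i ω ^ 2 ∂μ = c2)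
    (hI1 : ∀ i, Integrable (Y i) μ) (hI2 : ∀ i, Integrable (fun ω => Y i ω ^ 2) μ)
    (A B : Finset ℕ) :
    Integrable (fun ω => (∏ i ∈ A, Y i ω) * (∏ i ∈ B, Y i ω)) μ ∧
    ∫ ω, (∏ i ∈ A, Y i ω) * (∏ i ∈ B, Y i ω) ∂μ
      = mt ^ (A.card + B.card - 2 * (A ∩ B).card) * c2 ^ (A ∩ B).card := by
  classical
  set e : ℕ → ℕ := fun i => (if i ∈ A then 1 else 0) + (if i ∈ B then 1 else 0) with he
  set V : ℕ → Ω → ℝ := fun i ω => Y i ω ^ e i with hV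
  have hVmeas : ∀ i, Measurable (V i) := fun i => (hYmeas i).pow_const (e i)
  have hVindep : iIndepFun V μ := by
    have := hYindep.comp (fun i => fun y : ℝ => y ^ e i)
      (fun i => measurable_id.pow_const (e i))
    exact this
  have hVint : ∀ i ∈ A ∪ B, Integrable (V i) μ := by
    intro i _
    by_cases hA : i ∈ A <;> by_cases hB : i ∈ B
    · have hVi : V i = fun ω => Y i ω ^ 2 := by funext ω; simp [hV, he, hA, hB]
      rw [hVi]; exact hI2 i
    · have hVi : V i = fun ω => Y i ω := by funext ω; simp [hV, he, hA, hB]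
      rw [hVi]; exact hI1 i
    · have hVi : V i = fun ω => Y i ω := by funext ω; simp [hV, he, hA, hB]
      rw [hVi]; exact hI1 i
    · have hVi : V i = fun _ => (1:ℝ) := by funext ω; simp [hV, he, hA, hB]
      rw [hVi]; exact integrable_const 1
  obtain ⟨hI, hE⟩ := aux_prod_integral V hVmeas hVindep (A ∪ B) hVint
  have hpoint : ∀ ω, (∏ i ∈ A ∪ B, V i ω) = (∏ i ∈ A, Y i ω) * (∏ i ∈ B, Y i ω) := by
    intro ω
    have h1 : ∀ i, V i ω = (if i ∈ A then Y i ω else 1) * (if i ∈ B then Y i ω else 1) := by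
      intro i
      by_cases hA : i ∈ A <;> by_cases hB : i ∈ B <;>
        simp [hV, he, hA, hB, pow_succ]
    simp only [h1]
    rw [Finset.prod_mul_distrib, Finset.prod_ite_mem, Finset.prod_ite_mem,
      Finset.union_inter_cancel_left, Finset.union_inter_cancel_right]
  have hVval : ∀ i ∈ A ∪ B, ∫ ω, V i ω ∂μ = if i ∈ A ∩ B then c2 else mt := by
    intro i hi
    by_cases hA : i ∈ A <;> by_cases hB : i ∈ B
    · have hVi : V i = fun ω => Y i ω ^ 2 := by funext ω; simp [hV, he, hA, hB]
      simp only [hVi]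
      rw [if_pos (Finset.mem_inter.mpr ⟨hA, hB⟩)]; exact hm2 i
    · have hVi : V i = fun ω => Y i ω := by funext ω; simp [hV, he, hA, hB]
      simp only [hVi]
      rw [if_neg (by simp [Finset.mem_inter, hB])]; exact hm1 i
    · have hVi : V i = fun ω => Y i ω := by funext ω; simp [hV, he, hA, hB]
      simp only [hVi]
      rw [if_neg (by simp [Finset.mem_inter, hA])]; exact hm1 i
    · exfalso; simp [hA, hB] at hi
  constructor
  · exact hI.congr (by filter_upwards with ω; rw [hpoint ω])
  · have h2 : ∫ ω, (∏ i ∈ A, Y i ω) * (∏ i ∈ B, Y i ω) ∂μ = ∫ ω, ∏ i ∈ A ∪ B, V i ω ∂μ := by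
      apply integral_congr_ae; filter_upwards with ω; rw [hpoint ω]
    rw [h2, hE, Finset.prod_congr rfl hVval, Finset.prod_ite, Finset.prod_const, Finset.prod_const]
    have hf1 : (A ∪ B).filter (fun i => i ∈ A ∩ B) = A ∩ B := by
      rw [Finset.filter_mem_eq_inter]
      exact Finset.inter_eq_right.mpr (Finset.inter_subset_union)
    have hcards : ((A ∪ B).filter (fun i => ¬ i ∈ A ∩ B)).card = A.card + B.card - 2 * (A ∩ B).card := by
      have h3 := Finset.card_filter_add_card_filter_not (s := A ∪ B) (p := fun i => i ∈ A ∩ B)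
      have h4 := Finset.card_union_add_card_inter A B
      rw [hf1] at h3
      omega
    rw [hf1, hcards, mul_comm]


def win (r s n : ℕ) : Finset ℕ := (Finset.range n).image fun j => (s + j) % r

lemma win_injOn {r n : ℕ} (s : ℕ) (hn : n ≤ r) :
    ∀ x ∈ Finset.range n, ∀ y ∈ Finset.range n, (s + x) % r = (s + y) % r → x = y := by
  intro x hx y hy h
  simp only [Finset.mem_range] at hx hy
  have h1 : Nat.ModEq r x y := (Nat.ModEq.add_left_cancel' s h)
  have h2 : x % r = y % r := h1
  have hx' : x % r = x := Nat.mod_eq_of_lt (lt_of_lt_of_le hx hn)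
  have hy' : y % r = y := Nat.mod_eq_of_lt (lt_of_lt_of_le hy hn)
  omega

lemma win_card {r n : ℕ} (s : ℕ) (hn : n ≤ r) : (win r s n).card = n := by
  rw [win, Finset.card_image_of_injOn, Finset.card_range]
  intro x hx y hy h
  exact win_injOn s hn x (Finset.mem_coe.mp hx) y (Finset.mem_coe.mp hy) h

lemma win_prod {r n : ℕ} (s : ℕ) (hn : n ≤ r) (g : ℕ → ℝ) :
    ∏ i ∈ win r s n, g i = ∏ j ∈ Finset.range n, g ((s + j) % r) :=
  Finset.prod_image (win_injOn s hn)

lemma win_overlap_card {r s l k : ℕ} (hk : 1 ≤ k) (hkl : k ≤ l) (hr : l + k ≤ r) :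
    ((Finset.range r).filter (fun t => (win r s k ∩ win r t l).card ≠ 0)).card ≤ k + l - 1 := by
  classical
  have hsub : (Finset.range r).filter (fun t => (win r s k ∩ win r t l).card ≠ 0) ⊆
      (Finset.range (k + l - 1)).image (fun d => (s + (r - (l - 1)) + d) % r) := by
    intro t ht
    simp only [Finset.mem_filter, Finset.mem_range] at ht
    obtain ⟨htr, hcard⟩ := ht
    obtain ⟨i, hi⟩ := Finset.card_ne_zero.mp hcard
    rw [Finset.mem_inter] at hi
    obtain ⟨hiA, hiB⟩ := hi
    simp only [win, Finset.mem_image, Finset.mem_range] at hiA hiB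
    obtain ⟨j, hj, hje⟩ := hiA
    obtain ⟨j', hj', hje'⟩ := hiB
    have heq : (s + j) % r = (t + j') % r := by rw [hje, hje']
    refine Finset.mem_image.mpr ⟨j + (l - 1 - j'), Finset.mem_range.mpr (by omega), ?_⟩
    have harith : s + (r - (l - 1)) + (j + (l - 1 - j')) = s + j + (r - j') := by omega
    rw [harith]
    have h1 : (s + j + (r - j')) % r = ((s + j) % r + (r - j')) % r := (Nat.mod_add_mod _ _ _).symm
    rw [h1, heq, Nat.mod_add_mod]
    have h2 : t + j' + (r - j') = t + r := by omega
    rw [h2, Nat.add_mod_right]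
    exact Nat.mod_eq_of_lt htr
  calc ((Finset.range r).filter _).card ≤ _ := Finset.card_le_card hsub
    _ ≤ (Finset.range (k + l - 1)).card := Finset.card_image_le
    _ = k + l - 1 := Finset.card_range _


/-- The cycling estimator U_{r,k}^C. -/
noncomputable def cycEst {Ω : Type*} (X : ℕ → Ω → ℝ) (x0 : ℝ) (r k : ℕ) (ω : Ω) : ℝ :=
  (1 / (r : ℝ)) * ∑ s ∈ Finset.range r, ∏ j ∈ Finset.range k, (X ((s + j) % r) ω / x0 - 1)

/-- covariance bound for the cycling estimators when r ≥ l + k: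
Cov(U_{r,k}^C, U_{r,l}^C) < β₀^{l+k} ρ^k (l+k)/r. -/
theorem stmt11 {Ω : Type*} [MeasurableSpace Ω] (μ : Measure Ω) [IsProbabilityMeasure μ]
    (X : ℕ → Ω → ℝ) (x0 m σ2 mt ρ β0 : ℝ) (r l k : ℕ)
    (hk : 1 ≤ k) (hkl : k ≤ l) (hr : l + k ≤ r)
    (hmeas : ∀ i, Measurable (X i))
    (hindep : iIndepFun X μ)
    (hident : ∀ i j, IdentDistrib (X i) (X j) μ μ)
    (hmt : mt = m / x0 - 1) (hρ : ρ = 1 + σ2 / (m - x0) ^ 2) (hρ1 : 1 < ρ)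
    (hβ0 : β0 = |m / x0 - 1|)
    (hm1 : ∀ i, ∫ ω, (X i ω / x0 - 1) ∂μ = mt)
    (hm2 : ∀ i, ∫ ω, (X i ω / x0 - 1) ^ 2 ∂μ = mt ^ 2 * ρ) :
    (∫ ω, cycEst X x0 r k ω * cycEst X x0 r l ω ∂μ)
        - (∫ ω, cycEst X x0 r k ω ∂μ) * (∫ ω, cycEst X x0 r l ω ∂μ)
      < β0 ^ (l + k) * ρ ^ k * ((l : ℝ) + (k : ℝ)) / (r : ℝ) := by
  classical
  have hkr : k ≤ r := by omega
  have hlr : l ≤ r := by omega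
  have hr0 : 0 < r := by omega
  have hrR : (0:ℝ) < r := by exact_mod_cast hr0
  -- mt ≠ 0
  have hmt0 : mt ≠ 0 := by
    rcases eq_or_ne x0 0 with h0 | h0
    · rw [hmt, h0, div_zero]; norm_num
    · rcases eq_or_ne m x0 with h1 | h1
      · exfalso
        rw [h1, sub_self] at hρ
        norm_num at hρ
        linarith
      · rw [hmt]
        intro h
        apply h1
        have hdiv : m / x0 = 1 := by linarith
        field_simp at hdiv
        linarith
  have hρ0 : (0:ℝ) < ρ := by linarith
  have hc2ne : mt ^ 2 * ρ ≠ 0 := by positivity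
  have hβ0mt : β0 = |mt| := by rw [hβ0, hmt]
  have hβ0pos : 0 < β0 := by rw [hβ0mt]; exact abs_pos.mpr hmt0
  have hρk1 : 1 < ρ ^ k := one_lt_pow₀ hρ1 (by omega)
  -- the Y family
  set Y : ℕ → Ω → ℝ := fun i ω => X i ω / x0 - 1 with hYdef
  have hYmeas : ∀ i, Measurable (Y i) := fun i => ((hmeas i).div_const x0).sub measurable_const
  have hYindep : iIndepFun Y μ := by
    have := hindep.comp (fun _ => fun y : ℝ => y / x0 - 1)
      (fun _ => (measurable_id.div_const x0).sub measurable_const)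
    exact this
  have hm1' : ∀ i, ∫ ω, Y i ω ∂μ = mt := hm1
  have hm2' : ∀ i, ∫ ω, Y i ω ^ 2 ∂μ = mt ^ 2 * ρ := hm2
  have hI1 : ∀ i, Integrable (Y i) μ := by
    intro i; by_contra h
    exact hmt0 (by rw [← hm1' i, integral_undef h])
  have hI2 : ∀ i, Integrable (fun ω => Y i ω ^ 2) μ := by
    intro i; by_contra h
    exact hc2ne (by rw [← hm2' i, integral_undef h])
  have hpair := fun (A B : Finset ℕ) =>
    pair_expect Y hYmeas hYindep mt (mt ^ 2 * ρ) hm1' hm2' hI1 hI2 A B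
  -- single window: integrability and expectation
  have hwinprod : ∀ n ≤ r, ∀ s (ω : Ω),
      ∏ i ∈ win r s n, Y i ω = ∏ j ∈ Finset.range n, Y ((s + j) % r) ω := by
    intro n hn s ω
    exact win_prod s hn _
  have hsingle : ∀ n ≤ r, ∀ s,
      Integrable (fun ω => ∏ j ∈ Finset.range n, Y ((s + j) % r) ω) μ ∧
      ∫ ω, ∏ j ∈ Finset.range n, Y ((s + j) % r) ω ∂μ = mt ^ n := by
    intro n hn s
    obtain ⟨hInt, hE⟩ := hpair (win r s n) ∅
    constructor
    · refine hInt.congr ?_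
      filter_upwards with ω
      simp [hwinprod n hn s ω]
    · have h1 : ∫ ω, ∏ j ∈ Finset.range n, Y ((s + j) % r) ω ∂μ
          = ∫ ω, (∏ i ∈ win r s n, Y i ω) * (∏ i ∈ (∅ : Finset ℕ), Y i ω) ∂μ := by
        apply integral_congr_ae; filter_upwards with ω
        simp [hwinprod n hn s ω]
      rw [h1, hE]
      simp [win_card s hn]
  -- expectation of cycEst
  have hEcyc : ∀ n, n ≤ r → ∫ ω, cycEst X x0 r n ω ∂μ = mt ^ n := by
    intro n hn
    simp only [cycEst]
    rw [integral_const_mul _ _, integral_finset_sum _ (fun s _ => (hsingle n hn s).1)]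
    rw [Finset.sum_congr rfl (fun s _ => (hsingle n hn s).2)]
    rw [Finset.sum_const, Finset.card_range, nsmul_eq_mul]
    field_simp
  -- pair expectation in window form
  have hpairwin : ∀ s t,
      Integrable (fun ω => (∏ j ∈ Finset.range k, Y ((s + j) % r) ω)
        * (∏ j ∈ Finset.range l, Y ((t + j) % r) ω)) μ ∧
      ∫ ω, (∏ j ∈ Finset.range k, Y ((s + j) % r) ω)
        * (∏ j ∈ Finset.range l, Y ((t + j) % r) ω) ∂μ
        = mt ^ (k + l) * ρ ^ ((win r s k ∩ win r t l).card) := by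
    intro s t
    obtain ⟨hInt, hE⟩ := hpair (win r s k) (win r t l)
    have hfe : ∀ ω : Ω, (∏ i ∈ win r s k, Y i ω) * (∏ i ∈ win r t l, Y i ω)
        = (∏ j ∈ Finset.range k, Y ((s + j) % r) ω) * (∏ j ∈ Finset.range l, Y ((t + j) % r) ω) := by
      intro ω; rw [hwinprod k hkr s ω, hwinprod l hlr t ω]
    constructor
    · exact hInt.congr (by filter_upwards with ω; rw [hfe ω])
    · have h1 : ∫ ω, (∏ j ∈ Finset.range k, Y ((s + j) % r) ω)
          * (∏ j ∈ Finset.range l, Y ((t + j) % r) ω) ∂μ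
          = ∫ ω, (∏ i ∈ win r s k, Y i ω) * (∏ i ∈ win r t l, Y i ω) ∂μ := by
        apply integral_congr_ae; filter_upwards with ω; rw [hfe ω]
      rw [h1, hE, win_card s hkr, win_card t hlr]
      set o := (win r s k ∩ win r t l).card with ho
      have hok : o ≤ k := by
        rw [ho]
        calc (win r s k ∩ win r t l).card ≤ (win r s k).card :=
              Finset.card_le_card Finset.inter_subset_left
          _ = k := win_card s hkr
      have h2 : k + l - 2 * o + 2 * o = k + l := by omega
      calc mt ^ (k + l - 2 * o) * (mt ^ 2 * ρ) ^ o
          = mt ^ (k + l - 2 * o) * mt ^ (2 * o) * ρ ^ o := by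
            rw [mul_pow, ← pow_mul]; ring
        _ = mt ^ (k + l) * ρ ^ o := by rw [← pow_add, h2]
  -- the double integral
  have hdouble : ∫ ω, cycEst X x0 r k ω * cycEst X x0 r l ω ∂μ
      = (1/(r:ℝ)) * ((1/(r:ℝ)) * ∑ s ∈ Finset.range r, ∑ t ∈ Finset.range r,
          mt ^ (k + l) * ρ ^ ((win r s k ∩ win r t l).card)) := by
    have hfun : ∀ ω, cycEst X x0 r k ω * cycEst X x0 r l ω
        = (1/(r:ℝ)) * ((1/(r:ℝ)) * ∑ s ∈ Finset.range r, ∑ t ∈ Finset.range r,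
            ((∏ j ∈ Finset.range k, Y ((s + j) % r) ω)
              * (∏ j ∈ Finset.range l, Y ((t + j) % r) ω))) := by
      intro ω
      simp only [cycEst]
      rw [← Finset.sum_mul_sum]
      ring
    rw [show (fun ω => cycEst X x0 r k ω * cycEst X x0 r l ω) = fun ω =>
        (1/(r:ℝ)) * ((1/(r:ℝ)) * ∑ s ∈ Finset.range r, ∑ t ∈ Finset.range r,
            ((∏ j ∈ Finset.range k, Y ((s + j) % r) ω)
              * (∏ j ∈ Finset.range l, Y ((t + j) % r) ω))) from funext hfun]
    rw [integral_const_mul _ _, integral_const_mul _ _]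
    rw [integral_finset_sum _ (fun s _ => integrable_finset_sum _ (fun t _ => (hpairwin s t).1))]
    congr 1; congr 1
    refine Finset.sum_congr rfl (fun s _ => ?_)
    rw [integral_finset_sum _ (fun t _ => (hpairwin s t).1)]
    exact Finset.sum_congr rfl (fun t _ => (hpairwin s t).2)
  -- covariance expression
  have hrne : (r:ℝ) ≠ 0 := ne_of_gt hrR
  set D : ℝ := ∑ s ∈ Finset.range r, ∑ t ∈ Finset.range r,
      (ρ ^ ((win r s k ∩ win r t l).card) - 1) with hD
  have hcov : (∫ ω, cycEst X x0 r k ω * cycEst X x0 r l ω ∂μ)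
      - (∫ ω, cycEst X x0 r k ω ∂μ) * (∫ ω, cycEst X x0 r l ω ∂μ)
      = (1/(r:ℝ)) * (1/(r:ℝ)) * (mt ^ (k + l) * D) := by
    rw [hdouble, hEcyc k hkr, hEcyc l hlr, hD]
    have hpt : ∀ s t : ℕ, mt ^ (k+l) * ρ ^ ((win r s k ∩ win r t l).card)
        = mt ^ (k+l) * (ρ ^ ((win r s k ∩ win r t l).card) - 1) + mt ^ (k+l) := by
      intro s t; ring
    have hsplit : ∑ s ∈ Finset.range r, ∑ t ∈ Finset.range r,
        mt ^ (k + l) * ρ ^ ((win r s k ∩ win r t l).card)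
        = mt ^ (k + l) * (∑ s ∈ Finset.range r, ∑ t ∈ Finset.range r,
            (ρ ^ ((win r s k ∩ win r t l).card) - 1)) + (r:ℝ) * ((r:ℝ) * mt ^ (k + l)) := by
      simp only [hpt, Finset.sum_add_distrib, Finset.sum_const, Finset.card_range,
        nsmul_eq_mul, ← Finset.mul_sum]
    rw [hsplit, ← pow_add mt k l]
    field_simp
    ring
  -- bounds on D
  have hterm_nonneg : ∀ s t : ℕ, 0 ≤ ρ ^ ((win r s k ∩ win r t l).card) - 1 := by
    intro s t
    have h1 : (1:ℝ) ≤ ρ ^ ((win r s k ∩ win r t l).card) := one_le_pow₀ (le_of_lt hρ1)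
    linarith
  have hD0 : 0 ≤ D := Finset.sum_nonneg (fun s _ => Finset.sum_nonneg (fun t _ => hterm_nonneg s t))
  have hinner : ∀ s, ∑ t ∈ Finset.range r, (ρ ^ ((win r s k ∩ win r t l).card) - 1)
      ≤ ((k:ℝ) + l - 1) * (ρ ^ k - 1) := by
    intro s
    set T := (Finset.range r).filter (fun t => (win r s k ∩ win r t l).card ≠ 0) with hT
    have hTsum : ∑ t ∈ Finset.range r, (ρ ^ ((win r s k ∩ win r t l).card) - 1)
        = ∑ t ∈ T, (ρ ^ ((win r s k ∩ win r t l).card) - 1) := by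
      symm
      apply Finset.sum_subset (Finset.filter_subset _ _)
      intro t ht hnt
      have hc0 : (win r s k ∩ win r t l).card = 0 := by
        by_contra hc
        exact hnt (Finset.mem_filter.mpr ⟨ht, hc⟩)
      rw [hc0]; simp
    rw [hTsum]
    have hcardT : (T.card : ℝ) ≤ (k:ℝ) + l - 1 := by
      have h := win_overlap_card (r := r) (s := s) hk hkl hr
      have h2 : (T.card : ℝ) ≤ ((k + l - 1 : ℕ) : ℝ) := by exact_mod_cast h
      have h3 : ((k + l - 1 : ℕ) : ℝ) = (k:ℝ) + l - 1 := by
        have : 1 ≤ k + l := by omega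
        push_cast [Nat.cast_sub this]
        ring
      linarith
    have hbound : ∀ t ∈ T, ρ ^ ((win r s k ∩ win r t l).card) - 1 ≤ ρ ^ k - 1 := by
      intro t _
      have hok : (win r s k ∩ win r t l).card ≤ k := by
        have := win_card (r := r) s hkr
        calc (win r s k ∩ win r t l).card ≤ (win r s k).card :=
              Finset.card_le_card Finset.inter_subset_left
          _ = k := this
      have h4 := pow_le_pow_right₀ (le_of_lt hρ1) hok
      linarith
    calc ∑ t ∈ T, (ρ ^ ((win r s k ∩ win r t l).card) - 1)
        ≤ T.card • (ρ ^ k - 1) := Finset.sum_le_card_nsmul T _ _ hbound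
      _ = (T.card : ℝ) * (ρ ^ k - 1) := nsmul_eq_mul _ _
      _ ≤ ((k:ℝ) + l - 1) * (ρ ^ k - 1) :=
          mul_le_mul_of_nonneg_right hcardT (by linarith)
  have hDle : D ≤ (r:ℝ) * (((k:ℝ) + l - 1) * (ρ ^ k - 1)) := by
    rw [hD]
    calc ∑ s ∈ Finset.range r, ∑ t ∈ Finset.range r,
          (ρ ^ ((win r s k ∩ win r t l).card) - 1)
        ≤ ∑ _s ∈ Finset.range r, ((k:ℝ) + l - 1) * (ρ ^ k - 1) :=
          Finset.sum_le_sum (fun s _ => hinner s)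
      _ = (r:ℝ) * (((k:ℝ) + l - 1) * (ρ ^ k - 1)) := by
          rw [Finset.sum_const, Finset.card_range, nsmul_eq_mul]
  -- conclude
  have hkR : (1:ℝ) ≤ (k:ℝ) := by exact_mod_cast hk
  have hlR : (k:ℝ) ≤ (l:ℝ) := by exact_mod_cast hkl
  have hRHSpos : 0 < β0 ^ (l + k) * ρ ^ k * ((l : ℝ) + (k : ℝ)) / (r:ℝ) := by
    apply div_pos _ hrR
    apply mul_pos (mul_pos (pow_pos hβ0pos _) (pow_pos hρ0 _))
    linarith
  rw [hcov]
  rcases le_or_gt (mt ^ (k + l)) 0 with hsign | hsign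
  · have h1 : mt ^ (k + l) * D ≤ 0 := mul_nonpos_iff.mpr (Or.inr ⟨hsign, hD0⟩)
    have h2 : (0:ℝ) < (1/(r:ℝ)) * (1/(r:ℝ)) := by positivity
    nlinarith
  · have hbeta : β0 ^ (l + k) = mt ^ (k + l) := by
      rw [hβ0mt, ← abs_pow, show l + k = k + l from by omega, abs_of_pos hsign]
    rw [show mt ^ (k + l) = β0 ^ (l + k) from hbeta.symm]
    have hB : 0 < β0 ^ (l + k) := pow_pos hβ0pos _
    rw [lt_div_iff₀ hrR]
    -- goal: (1/r)*(1/r)*(B*D) * r < B*ρ^k*(l+k)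
    have hCC : ((k:ℝ) + l - 1) * (ρ ^ k - 1) < ρ ^ k * ((l:ℝ) + (k:ℝ)) := by
      nlinarith [hρk1, hkR, hlR]
    have hDle2 : D ≤ (r:ℝ) * (ρ ^ k * ((l:ℝ) + (k:ℝ))) := by
      calc D ≤ (r:ℝ) * (((k:ℝ) + l - 1) * (ρ ^ k - 1)) := hDle
        _ ≤ (r:ℝ) * (ρ ^ k * ((l:ℝ) + (k:ℝ))) :=
            mul_le_mul_of_nonneg_left (le_of_lt hCC) (le_of_lt hrR)
    have hDlt : D < (r:ℝ) * (ρ ^ k * ((l:ℝ) + (k:ℝ))) := by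
      rcases eq_or_lt_of_le hDle with h | h
      · rw [h]
        exact mul_lt_mul_of_pos_left hCC hrR
      · exact lt_of_lt_of_le h (by
          exact mul_le_mul_of_nonneg_left (le_of_lt hCC) (le_of_lt hrR))
    have hmain : (1/(r:ℝ)) * (1/(r:ℝ)) * (β0 ^ (l + k) * D) * r = β0 ^ (l + k) * D / r := by
      field_simp
    rw [hmain, div_lt_iff₀ hrR]
    calc β0 ^ (l + k) * D < β0 ^ (l + k) * ((r:ℝ) * (ρ ^ k * ((l:ℝ) + (k:ℝ)))) :=
          mul_lt_mul_of_pos_left hDlt hB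
      _ = β0 ^ (l + k) * ρ ^ k * ((l:ℝ) + (k:ℝ)) * (r:ℝ) := by ring
end

section
/- Let γ_k be real numbers, R a random variable on {0,1,2,...} with P(R ≥ k) > 0 for all k, independent of a family of integrable random variables {U_{r,k} : k ≤ r} with E[U_{r,k}] = θ^k for some θ, U_{r,0} = 1, and a_k := sup_{r ≥ k} E[|U_{r,k}|] < ∞ with ∑_k |γ_k| a_k < ∞. Then f̂ := ∑_{k=0}^∞ (1{R ≥ k}/P(R ≥ k)) γ_k U_{R,k} is almost surely absolutely convergent, integrable, and E[f̂] = ∑_{k=0}^∞ γ_k θ^k. -/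
open MeasureTheory ProbabilityTheory
open scoped ENNReal NNReal

/-- integrability and unbiasedness of the general sum estimator
f̂ = ∑_k (1{R ≥ k}/P(R ≥ k)) γ_k U_{R,k}. -/
theorem stmt18 {Ω : Type*} [MeasurableSpace Ω] (μ : Measure Ω) [IsProbabilityMeasure μ]
    (γ : ℕ → ℝ) (θ : ℝ) (R : Ω → ℕ) (hR : Measurable R)
    (hRpos : ∀ k, 0 < μ {ω | k ≤ R ω})
    (U : ℕ → ℕ → Ω → ℝ) (hUmeas : ∀ r k, Measurable (U r k))
    (hindepRU : Indep (MeasurableSpace.comap R ⊤)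
      (⨆ p : ℕ × ℕ, MeasurableSpace.comap (U p.1 p.2) inferInstance) μ)
    (hUint : ∀ r k, k ≤ r → Integrable (U r k) μ)
    (hUmean : ∀ r k, k ≤ r → ∫ ω, U r k ω ∂μ = θ ^ k)
    (hU0 : ∀ r, U r 0 = fun _ => 1)
    (a : ℕ → ℝ) (ha : ∀ k, a k = ⨆ r : {r : ℕ // k ≤ r}, ∫ ω, |U r.1 k ω| ∂μ)
    (hbdd : ∀ k, BddAbove (Set.range fun r : {r : ℕ // k ≤ r} => ∫ ω, |U r.1 k ω| ∂μ))
    (hsum : Summable fun k => |γ k| * a k) :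
    (∀ᵐ ω ∂μ, Summable fun k : ℕ =>
        |if k ≤ R ω then γ k * U (R ω) k ω / (μ {ω' | k ≤ R ω'}).toReal else 0|) ∧
    Integrable (fun ω => ∑' k : ℕ,
        if k ≤ R ω then γ k * U (R ω) k ω / (μ {ω' | k ≤ R ω'}).toReal else 0) μ ∧
    ∫ ω, (∑' k : ℕ,
        if k ≤ R ω then γ k * U (R ω) k ω / (μ {ω' | k ≤ R ω'}).toReal else 0) ∂μ
      = ∑' k : ℕ, γ k * θ ^ k := by
  classical
  set c : ℕ → ℝ := fun k => (μ {ω' | k ≤ R ω'}).toReal with hc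
  have hμfin : ∀ k, μ {ω' | k ≤ R ω'} ≠ ⊤ := fun k => measure_ne_top μ _
  have hcpos : ∀ k, 0 < c k := fun k => ENNReal.toReal_pos (hRpos k).ne' (hμfin k)
  have ha0 : ∀ k, 0 ≤ a k := by
    intro k
    rw [ha k]
    exact le_trans (integral_nonneg fun ω => abs_nonneg _)
      (le_ciSup (hbdd k) (⟨k, le_rfl⟩ : {r : ℕ // k ≤ r}))
  have haU : ∀ k r, k ≤ r → ∫ ω, |U r k ω| ∂μ ≤ a k := by
    intro k r hkr
    rw [ha k]
    exact le_ciSup (hbdd k) (⟨r, hkr⟩ : {r : ℕ // k ≤ r})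
  set g : ℕ → Ω → ℝ := fun k ω => if k ≤ R ω then γ k * U (R ω) k ω / c k else 0 with hgdef
  set F : ℕ → ℕ → Ω → ℝ :=
    fun k r ω => if R ω = r ∧ k ≤ r then γ k * U r k ω / c k else 0 with hFdef
  have hg_eq : ∀ k ω, g k ω
      = if k ≤ R ω then γ k * U (R ω) k ω / (μ {ω' | k ≤ R ω'}).toReal else 0 := by
    intro k ω; simp only [hgdef, hc]
  -- measurability
  have hUR : ∀ k, Measurable fun ω => U (R ω) k ω := by
    intro k
    have h1 : Measurable fun p : Ω × ℕ => U p.2 k p.1 :=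
      measurable_from_prod_countable_left fun r => hUmeas r k
    exact h1.comp (measurable_id.prodMk hR)
  have hsets : ∀ k, MeasurableSet {ω | k ≤ R ω} :=
    fun k => hR ((Set.to_countable (Set.Ici k)).measurableSet)
  have hsetr : ∀ r, MeasurableSet {ω | R ω = r} := fun r => hR (measurableSet_singleton r)
  have hgmeas : ∀ k, Measurable (g k) := by
    intro k
    exact Measurable.ite (hsets k) ((measurable_const.mul (hUR k)).div_const _) measurable_const
  have hFmeas : ∀ k r, Measurable (F k r) := by
    intro k r
    exact Measurable.ite ((hsetr r).inter (MeasurableSet.const _))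
      ((measurable_const.mul (hUmeas r k)).div_const _) measurable_const
  -- independence
  have hIndepU : ∀ r k, IndepFun R (U r k) μ := by
    intro r k
    rw [IndepFun_iff]
    rw [Indep_iff] at hindepRU
    intro t1 t2 h1 h2
    refine hindepRU t1 t2 ?_ ?_
    · exact MeasurableSpace.comap_mono le_top _ h1
    · exact le_iSup (fun p : ℕ × ℕ => MeasurableSpace.comap (U p.1 p.2) inferInstance) (r, k) _ h2
  have hprod_eq : ∀ (r : ℕ) (h : Ω → ℝ), (fun ω => (if R ω = r then (1:ℝ) else 0) * h ω)
      = Set.indicator {ω | R ω = r} h := by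
    intro r h; funext ω; by_cases hh : R ω = r <;> simp [Set.indicator_apply, hh]
  have hXint : ∀ r : ℕ, Integrable (fun ω => if R ω = r then (1:ℝ) else 0) μ := by
    intro r
    have h : (fun ω => if R ω = r then (1:ℝ) else 0)
        = Set.indicator {ω | R ω = r} (fun _ => (1:ℝ)) := by
      funext ω; by_cases hh : R ω = r <;> simp [Set.indicator_apply, hh]
    rw [h]
    exact (integrable_const (1:ℝ)).indicator (hsetr r)
  have hXval : ∀ r : ℕ, ∫ ω, (if R ω = r then (1:ℝ) else 0) ∂μ = (μ {ω | R ω = r}).toReal := by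
    intro r
    have h : (fun ω => if R ω = r then (1:ℝ) else 0)
        = Set.indicator {ω | R ω = r} (fun _ => (1:ℝ)) := by
      funext ω; by_cases hh : R ω = r <;> simp [Set.indicator_apply, hh]
    rw [h, integral_indicator_const (1:ℝ) (hsetr r)]
    simp [measureReal_def]
  have hkey : ∀ r k, k ≤ r → ∀ φ : ℝ → ℝ, Measurable φ → Integrable (fun ω => φ (U r k ω)) μ →
      ∫ ω, (if R ω = r then (1:ℝ) else 0) * φ (U r k ω) ∂μ
        = (μ {ω | R ω = r}).toReal * ∫ ω, φ (U r k ω) ∂μ := by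
    intro r k hkr φ hφ hφint
    have h1 : IndepFun (fun ω => if R ω = r then (1:ℝ) else 0) (fun ω => φ (U r k ω)) μ :=
      (hIndepU r k).comp (φ := fun n : ℕ => if n = r then (1:ℝ) else 0) (ψ := φ)
        measurable_from_top hφ
    calc ∫ ω, (if R ω = r then (1:ℝ) else 0) * φ (U r k ω) ∂μ
        = (∫ ω, (if R ω = r then (1:ℝ) else 0) ∂μ) * ∫ ω, φ (U r k ω) ∂μ :=
          IndepFun.integral_fun_mul_eq_mul_integral h1 (hXint r).aestronglyMeasurable hφint.aestronglyMeasurable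
      _ = (μ {ω | R ω = r}).toReal * ∫ ω, φ (U r k ω) ∂μ := by rw [hXval r]
  -- pointwise descriptions of F
  have hFeq : ∀ k r, k ≤ r →
      F k r = fun ω => (if R ω = r then (1:ℝ) else 0) * (γ k * U r k ω / c k) := by
    intro k r hkr; funext ω
    by_cases h : R ω = r <;> simp [hFdef, h, hkr]
  have hFabs : ∀ k r, k ≤ r → (fun ω => |F k r ω|)
      = fun ω => (if R ω = r then (1:ℝ) else 0) * (|γ k| * |U r k ω| / c k) := by
    intro k r hkr; funext ω
    by_cases h : R ω = r <;>
      simp [hFdef, h, hkr, abs_mul, abs_div, abs_of_pos (hcpos k)]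
  have hFzero : ∀ k r, ¬ k ≤ r → F k r = fun _ => 0 := by
    intro k r hkr; funext ω; simp [hFdef, hkr]
  have hFint : ∀ k r, k ≤ r → Integrable (F k r) μ := by
    intro k r hkr
    rw [hFeq k r hkr, hprod_eq]
    exact (((hUint r k hkr).const_mul (γ k)).div_const (c k)).indicator (hsetr r)
  have hFval : ∀ k r, k ≤ r →
      ∫ ω, F k r ω ∂μ = (μ {ω | R ω = r}).toReal * (γ k * θ ^ k / c k) := by
    intro k r hkr
    rw [hFeq k r hkr]
    refine Eq.trans (hkey r k hkr (fun y => γ k * y / c k)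
      ((measurable_id.const_mul _).div_const _)
      (((hUint r k hkr).const_mul _).div_const _)) ?_
    congr 1
    rw [integral_div, integral_const_mul, hUmean r k hkr]
  have hFabsval : ∀ k r, k ≤ r →
      ∫ ω, |F k r ω| ∂μ
        = (μ {ω | R ω = r}).toReal * (|γ k| * (∫ ω, |U r k ω| ∂μ) / c k) := by
    intro k r hkr
    have h0 : (fun ω => |F k r ω|)
        = fun ω => (if R ω = r then (1:ℝ) else 0) * (|γ k| * |U r k ω| / c k) := hFabs k r hkr
    calc ∫ ω, |F k r ω| ∂μ
        = ∫ ω, (if R ω = r then (1:ℝ) else 0) * (|γ k| * |U r k ω| / c k) ∂μ :=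
          congrArg (fun f => ∫ ω, f ω ∂μ) h0
      _ = (μ {ω | R ω = r}).toReal * ∫ ω, |γ k| * |U r k ω| / c k ∂μ :=
          hkey r k hkr (fun y => |γ k| * |y| / c k)
            ((measurable_abs.const_mul _).div_const _)
            (((hUint r k hkr).abs.const_mul _).div_const _)
      _ = (μ {ω | R ω = r}).toReal * (|γ k| * (∫ ω, |U r k ω| ∂μ) / c k) := by
          rw [integral_div, integral_const_mul]
  -- bound on the norm lintegrals
  have hBnd : ∀ k r, ∫⁻ ω, ‖F k r ω‖₊ ∂μ ≤
      (if k ≤ r then μ {ω | R ω = r} * ENNReal.ofReal (|γ k| * a k / c k) else 0) := by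
    intro k r
    by_cases hkr : k ≤ r
    · rw [if_pos hkr]
      have h1 : ∫⁻ ω, ‖F k r ω‖₊ ∂μ = ENNReal.ofReal (∫ ω, ‖F k r ω‖ ∂μ) :=
        (ofReal_integral_norm_eq_lintegral_enorm (hFint k r hkr)).symm
      rw [h1]
      have h2 : ∫ ω, ‖F k r ω‖ ∂μ
          = (μ {ω | R ω = r}).toReal * (|γ k| * (∫ ω, |U r k ω| ∂μ) / c k) := by
        simp only [Real.norm_eq_abs]
        exact hFabsval k r hkr
      rw [h2]
      have h3 : (μ {ω | R ω = r}).toReal * (|γ k| * (∫ ω, |U r k ω| ∂μ) / c k)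
          ≤ (μ {ω | R ω = r}).toReal * (|γ k| * a k / c k) := by
        gcongr
        exact haU k r hkr
      calc ENNReal.ofReal ((μ {ω | R ω = r}).toReal * (|γ k| * (∫ ω, |U r k ω| ∂μ) / c k))
          ≤ ENNReal.ofReal ((μ {ω | R ω = r}).toReal * (|γ k| * a k / c k)) :=
            ENNReal.ofReal_le_ofReal h3
        _ = μ {ω | R ω = r} * ENNReal.ofReal (|γ k| * a k / c k) := by
            rw [ENNReal.ofReal_mul ENNReal.toReal_nonneg,
              ENNReal.ofReal_toReal (measure_ne_top μ _)]
    · rw [if_neg hkr, hFzero k r hkr]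
      simp
  -- sum of the measures
  have hmeasSum : ∀ k, (∑' r, (if k ≤ r then μ {ω | R ω = r} else 0)) = μ {ω | k ≤ R ω} := by
    intro k
    have hU : {ω | k ≤ R ω} = ⋃ r, (if k ≤ r then {ω | R ω = r} else ∅) := by
      ext ω
      simp only [Set.mem_setOf_eq, Set.mem_iUnion]
      constructor
      · intro h; exact ⟨R ω, by simp [h]⟩
      · rintro ⟨r, hr⟩
        by_cases hkr : k ≤ r
        · rw [if_pos hkr] at hr
          have : R ω = r := hr
          rw [this]; exact hkr
        · rw [if_neg hkr] at hr; exact absurd hr (Set.notMem_empty ω)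
    have hd : Pairwise (Function.onFun Disjoint fun r => (if k ≤ r then {ω | R ω = r} else ∅)) := by
      intro i j hij
      dsimp [Function.onFun]
      by_cases hi : k ≤ i <;> by_cases hj : k ≤ j <;> simp [hi, hj]
      exact Set.disjoint_left.mpr (fun ω h1 h2 => hij (by
        have e1 : R ω = i := h1
        have e2 : R ω = j := h2
        rw [← e1, ← e2]))
    have hm : ∀ r : ℕ, MeasurableSet (if k ≤ r then {ω | R ω = r} else ∅) := by
      intro r; split
      · exact hsetr r
      · exact MeasurableSet.empty
    rw [hU, measure_iUnion hd hm]
    apply tsum_congr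
    intro r
    split <;> simp
  have hAk : ∀ k, ∑' r, ∫⁻ ω, ‖F k r ω‖₊ ∂μ ≤ ENNReal.ofReal (|γ k| * a k) := by
    intro k
    calc ∑' r, ∫⁻ ω, ‖F k r ω‖₊ ∂μ
        ≤ ∑' r, (if k ≤ r then μ {ω | R ω = r} * ENNReal.ofReal (|γ k| * a k / c k) else 0) :=
          ENNReal.tsum_le_tsum (hBnd k)
      _ = ∑' r, (if k ≤ r then μ {ω | R ω = r} else 0) * ENNReal.ofReal (|γ k| * a k / c k) := by
          apply tsum_congr; intro r; split <;> simp
      _ = (∑' r, (if k ≤ r then μ {ω | R ω = r} else 0)) * ENNReal.ofReal (|γ k| * a k / c k) :=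
          ENNReal.tsum_mul_right
      _ = μ {ω | k ≤ R ω} * ENNReal.ofReal (|γ k| * a k / c k) := by rw [hmeasSum k]
      _ = ENNReal.ofReal (c k) * ENNReal.ofReal (|γ k| * a k / c k) := by
          rw [hc]; rw [ENNReal.ofReal_toReal (hμfin k)]
      _ = ENNReal.ofReal (c k * (|γ k| * a k / c k)) := by
          rw [ENNReal.ofReal_mul (le_of_lt (hcpos k))]
      _ = ENNReal.ofReal (|γ k| * a k) := by
          rw [mul_comm, div_mul_cancel₀ _ (ne_of_gt (hcpos k))]
  have hgF : ∀ k ω, g k ω = F k (R ω) ω := by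
    intro k ω; simp [hgdef, hFdef]
  have hgnorm_le : ∀ k, ∫⁻ ω, ‖g k ω‖₊ ∂μ ≤ ENNReal.ofReal (|γ k| * a k) := by
    intro k
    calc ∫⁻ ω, ‖g k ω‖₊ ∂μ
        ≤ ∫⁻ ω, ∑' r, (‖F k r ω‖₊ : ℝ≥0∞) ∂μ :=
          lintegral_mono fun ω => by rw [hgF k ω]; exact ENNReal.le_tsum (R ω)
      _ = ∑' r, ∫⁻ ω, ‖F k r ω‖₊ ∂μ :=
          lintegral_tsum fun r => (hFmeas k r).enorm.aemeasurable
      _ ≤ ENNReal.ofReal (|γ k| * a k) := hAk k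
  have htotal : ∑' k, ∫⁻ ω, ‖g k ω‖₊ ∂μ ≠ ⊤ := by
    have h1 : ∑' k, ∫⁻ ω, ‖g k ω‖₊ ∂μ ≤ ∑' k, ENNReal.ofReal (|γ k| * a k) :=
      ENNReal.tsum_le_tsum hgnorm_le
    have h2 : ∑' k, ENNReal.ofReal (|γ k| * a k) = ENNReal.ofReal (∑' k, |γ k| * a k) :=
      (ENNReal.ofReal_tsum_of_nonneg (fun k => mul_nonneg (abs_nonneg _) (ha0 k)) hsum).symm
    exact ne_top_of_le_ne_top (by rw [h2]; exact ENNReal.ofReal_ne_top) h1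
  -- a.e. summability
  have hae : ∀ᵐ ω ∂μ, Summable fun k => |g k ω| := by
    have hml : ∫⁻ ω, ∑' k, (‖g k ω‖₊ : ℝ≥0∞) ∂μ ≠ ⊤ := by
      rw [lintegral_tsum (f := fun k ω => (‖g k ω‖₊ : ℝ≥0∞)) fun k => (hgmeas k).enorm.aemeasurable]; exact htotal
    have hfin := ae_lt_top (Measurable.ennreal_tsum fun k => (hgmeas k).enorm) hml
    filter_upwards [hfin] with ω hω
    have hsummable : Summable fun k => ‖g k ω‖₊ := by
      rw [← ENNReal.tsum_coe_ne_top_iff_summable]; exact hω.ne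
    have h := NNReal.summable_coe.mpr hsummable
    simpa only [coe_nnnorm, Real.norm_eq_abs] using h
  have hsnn : ∀ ω, (Summable fun k => |g k ω|) → Summable fun k => ‖g k ω‖₊ := by
    intro ω hω
    rw [← NNReal.summable_coe]
    simpa only [coe_nnnorm, Real.norm_eq_abs] using hω
  -- integrability
  have hGmeas : AEStronglyMeasurable (fun ω => ∑' k, g k ω) μ := by
    apply aestronglyMeasurable_of_tendsto_ae (u := Filter.atTop)
      (f := fun n ω => ∑ k ∈ Finset.range n, g k ω)
    · intro n
      exact (Finset.measurable_sum (Finset.range n) fun k _ => hgmeas k).aestronglyMeasurable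
    · filter_upwards [hae] with ω hω
      exact (hω.of_abs).hasSum.tendsto_sum_nat
  have hGint : Integrable (fun ω => ∑' k, g k ω) μ := by
    refine ⟨hGmeas, ?_⟩
    have hb : ∫⁻ ω, ‖∑' k, g k ω‖₊ ∂μ ≤ ∫⁻ ω, ∑' k, (‖g k ω‖₊ : ℝ≥0∞) ∂μ := by
      apply lintegral_mono_ae
      filter_upwards [hae] with ω hω
      have hs := hsnn ω hω
      calc (‖∑' k, g k ω‖₊ : ℝ≥0∞) ≤ ((∑' k, ‖g k ω‖₊ : ℝ≥0) : ℝ≥0∞) :=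
            ENNReal.coe_le_coe.mpr (nnnorm_tsum_le hs)
        _ = ∑' k, (‖g k ω‖₊ : ℝ≥0∞) := ENNReal.coe_tsum hs
    refine lt_of_le_of_lt hb ?_
    rw [lintegral_tsum (f := fun k ω => (‖g k ω‖₊ : ℝ≥0∞)) fun k => (hgmeas k).enorm.aemeasurable]
    exact lt_top_iff_ne_top.mpr htotal
  -- value of each integral
  have hint_g : ∀ k, ∫ ω, g k ω ∂μ = γ k * θ ^ k := by
    intro k
    have hgt : (fun ω => g k ω) = fun ω => ∑' r, F k r ω := by
      funext ω
      have hz : ∀ r, r ≠ R ω → F k r ω = 0 := by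
        intro r hr
        have : ¬ (R ω = r) := fun h => hr h.symm
        simp [hFdef, this]
      rw [tsum_eq_single (R ω) hz, hgF k ω]
    have hsum_real : ∑' r, (if k ≤ r then (μ {ω | R ω = r}).toReal else 0) = c k := by
      have h2 : (∑' r, (if k ≤ r then μ {ω | R ω = r} else 0)).toReal = c k := by
        rw [hmeasSum k]
      rw [← h2, ENNReal.tsum_toReal_eq]
      · apply tsum_congr; intro r; split <;> simp
      · intro r; split
        · exact measure_ne_top μ _
        · exact ENNReal.zero_ne_top
    have hval : ∀ r, ∫ ω, F k r ω ∂μ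
        = (if k ≤ r then (μ {ω | R ω = r}).toReal else 0) * (γ k * θ ^ k / c k) := by
      intro r
      by_cases hkr : k ≤ r
      · rw [if_pos hkr]; exact hFval k r hkr
      · rw [if_neg hkr, hFzero k r hkr]
        simp
    calc ∫ ω, g k ω ∂μ
        = ∫ ω, ∑' r, F k r ω ∂μ := by rw [hgt]
      _ = ∑' r, ∫ ω, F k r ω ∂μ :=
          integral_tsum (fun r => (hFmeas k r).aestronglyMeasurable)
            (ne_top_of_le_ne_top ENNReal.ofReal_ne_top (hAk k))
      _ = ∑' r, (if k ≤ r then (μ {ω | R ω = r}).toReal else 0) * (γ k * θ ^ k / c k) :=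
          tsum_congr hval
      _ = (∑' r, (if k ≤ r then (μ {ω | R ω = r}).toReal else 0)) * (γ k * θ ^ k / c k) :=
          tsum_mul_right
      _ = c k * (γ k * θ ^ k / c k) := by rw [hsum_real]
      _ = γ k * θ ^ k := by rw [mul_comm, div_mul_cancel₀ _ (ne_of_gt (hcpos k))]
  refine ⟨?_, ?_, ?_⟩
  · filter_upwards [hae] with ω hω
    have : (fun k : ℕ =>
        |if k ≤ R ω then γ k * U (R ω) k ω / (μ {ω' | k ≤ R ω'}).toReal else 0|)
        = fun k => |g k ω| := by
      funext k; rw [hg_eq k ω]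
    rw [this]; exact hω
  · have : (fun ω => ∑' k : ℕ,
        if k ≤ R ω then γ k * U (R ω) k ω / (μ {ω' | k ≤ R ω'}).toReal else 0)
        = fun ω => ∑' k, g k ω := by
      funext ω; apply tsum_congr; intro k; rw [hg_eq k ω]
    rw [this]; exact hGint
  · have h1 : (fun ω => ∑' k : ℕ,
        if k ≤ R ω then γ k * U (R ω) k ω / (μ {ω' | k ≤ R ω'}).toReal else 0)
        = fun ω => ∑' k, g k ω := by
      funext ω; apply tsum_congr; intro k; rw [hg_eq k ω]
    rw [h1, integral_tsum (fun k => (hgmeas k).aestronglyMeasurable) htotal]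
    exact tsum_congr hint_g
end

section
/- Let geometric truncation R ~ Geometric(p). If 0 < β_0 < 1, c > 0, |γ_k| ≤ c for all k, and 0 < p < 1 - β_0², then ∑_{k=1}^∞ k² γ_k² β_0^{2k-2} ((1-p)^{-(k-1)} - 1) + 2 ∑_{k=1}^∞ ∑_{l=k+1}^∞ k l |γ_k γ_l| β_0^{k+l-2} ((1-p)^{-(k-1)} - 1) is finite and is O(p) as p → 0. -/
open Filter


private lemma geoS {q : ℝ} (h0 : 0 < q) (h1 : q < 1) (n : ℕ) :
    Summable (fun k : ℕ => (k : ℝ) ^ n * q ^ (k - 1)) := by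
  rw [← summable_nat_add_iff 1]
  have hgeo : Summable (fun k : ℕ => (2 : ℝ) ^ n * ((k : ℝ) ^ n * q ^ k) + (2 : ℝ) ^ n * q ^ k) :=
    ((summable_pow_mul_geometric_of_norm_lt_one (R := ℝ) n
        (by rw [Real.norm_eq_abs, abs_of_pos h0]; exact h1)).mul_left _).add
      ((summable_geometric_of_lt_one h0.le h1).mul_left _)
  apply hgeo.of_nonneg_of_le
  · intro k; positivity
  · intro k
    have hq : (0 : ℝ) ≤ q ^ k := by positivity
    have hb : ((k : ℝ) + 1) ^ n ≤ (2 : ℝ) ^ n * (k : ℝ) ^ n + 2 ^ n := by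
      rcases Nat.eq_zero_or_pos k with hk | hk
      · subst hk
        simp only [Nat.cast_zero, zero_add, one_pow]
        have h1 : (1:ℝ) ≤ 2 ^ n := one_le_pow₀ (by norm_num)
        nlinarith [pow_nonneg (le_refl (0:ℝ)) n]
      · have h2k : ((k : ℝ) + 1) ≤ 2 * k := by
          have : (1 : ℝ) ≤ (k : ℝ) := by exact_mod_cast hk
          linarith
        calc ((k : ℝ) + 1) ^ n ≤ (2 * (k : ℝ)) ^ n :=
              pow_le_pow_left₀ (by positivity) h2k n
          _ = 2 ^ n * (k : ℝ) ^ n := mul_pow 2 _ n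
          _ ≤ _ := le_add_of_nonneg_right (by positivity)
    have : (((k + 1 : ℕ) : ℝ)) ^ n * q ^ (k + 1 - 1) = ((k : ℝ) + 1) ^ n * q ^ k := by
      push_cast; norm_num
    rw [this]
    nlinarith [mul_le_mul_of_nonneg_right hb hq]



private lemma delta_nonneg {p : ℝ} (hp0 : 0 ≤ p) (hp1 : p < 1) (j : ℕ) :
    0 ≤ ((1 - p) ^ j)⁻¹ - 1 := by
  have h1 : 0 < 1 - p := by linarith
  have hx : (1 - p) ^ j ≤ 1 := pow_le_one₀ h1.le (by linarith)
  have hx0 : 0 < (1 - p) ^ j := by positivity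
  have h2 : (1:ℝ) ≤ ((1 - p) ^ j)⁻¹ := (one_le_inv₀ hx0).mpr hx
  linarith

private lemma delta_le {p : ℝ} (hp1 : p < 1) (j : ℕ) :
    ((1 - p) ^ j)⁻¹ - 1 ≤ (j : ℝ) * p * ((1 - p) ^ j)⁻¹ := by
  have h1 : 0 < 1 - p := by linarith
  have hx0 : 0 < (1 - p) ^ j := by positivity
  have hb : 1 - (j : ℝ) * p ≤ (1 - p) ^ j := by
    have := one_add_mul_le_pow (a := -p) (by linarith) j
    calc (1 : ℝ) - j * p = 1 + j * (-p) := by ring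
      _ ≤ (1 + -p) ^ j := this
      _ = (1 - p) ^ j := by ring_nf
  have key : ((1 - p) ^ j)⁻¹ - 1 = (1 - (1 - p) ^ j) * ((1 - p) ^ j)⁻¹ := by
    field_simp
  rw [key]
  exact mul_le_mul_of_nonneg_right (by linarith) (by positivity)

private lemma key_pow (β0 p : ℝ) (k : ℕ) :
    β0 ^ (2 * k - 2) * ((1 - p) ^ (k - 1))⁻¹ = (β0 ^ 2 / (1 - p)) ^ (k - 1) := by
  rw [show 2 * k - 2 = 2 * (k - 1) from by omega, pow_mul, ← div_eq_mul_inv, ← div_pow]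

private lemma bnd1 {β0 c p s : ℝ} {γ : ℕ → ℝ} (hβ0 : 0 < β0) (hc : 0 ≤ c)
    (hγ : ∀ k, |γ k| ≤ c) (hp0 : 0 < p) (hp1 : p < 1)
    (hs : β0 ^ 2 / (1 - p) ≤ s) (k : ℕ) :
    (if 1 ≤ k then (k : ℝ) ^ 2 * (γ k) ^ 2 * β0 ^ (2 * k - 2) * (((1 - p) ^ (k - 1))⁻¹ - 1)
      else 0)
      ≤ p * (c ^ 2 * ((k : ℝ) ^ 3 * s ^ (k - 1))) := by
  have h1p : 0 < 1 - p := by linarith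
  have hq0 : 0 < β0 ^ 2 / (1 - p) := by positivity
  have hs0 : 0 < s := lt_of_lt_of_le hq0 hs
  split_ifs with hk
  · have hδ := delta_le hp1 (k - 1)
    have hδ0 := delta_nonneg hp0.le hp1 (k - 1)
    have hγ2 : (γ k) ^ 2 ≤ c ^ 2 := by
      nlinarith [hγ k, abs_nonneg (γ k), le_abs_self (γ k), neg_abs_le (γ k)]
    have hkc : ((k - 1 : ℕ) : ℝ) ≤ (k : ℝ) := by exact_mod_cast Nat.sub_le k 1
    have hδ' : ((1 - p) ^ (k - 1))⁻¹ - 1 ≤ (k : ℝ) * p * ((1 - p) ^ (k - 1))⁻¹ :=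
      le_trans hδ (by
        apply mul_le_mul_of_nonneg_right _ (by positivity)
        exact mul_le_mul_of_nonneg_right hkc hp0.le)
    calc (k : ℝ) ^ 2 * (γ k) ^ 2 * β0 ^ (2 * k - 2) * (((1 - p) ^ (k - 1))⁻¹ - 1)
        ≤ (k : ℝ) ^ 2 * c ^ 2 * β0 ^ (2 * k - 2) * ((k : ℝ) * p * ((1 - p) ^ (k - 1))⁻¹) := by
          gcongr <;> positivity
      _ = p * (c ^ 2 * ((k : ℝ) ^ 3 * (β0 ^ 2 / (1 - p)) ^ (k - 1))) := by
          rw [← key_pow β0 p k]; ring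
      _ ≤ p * (c ^ 2 * ((k : ℝ) ^ 3 * s ^ (k - 1))) := by
          have := pow_le_pow_left₀ hq0.le hs (k - 1)
          gcongr
  · have hk0 : k = 0 := by omega
    subst hk0; norm_num

private lemma bnd2 {β0 c p s : ℝ} {γ : ℕ → ℝ} (hβ0 : 0 < β0) (hc : 0 ≤ c)
    (hγ : ∀ k, |γ k| ≤ c) (hp0 : 0 < p) (hp1 : p < 1)
    (hs : β0 ^ 2 / (1 - p) ≤ s) (k m : ℕ) :
    (if 1 ≤ k ∧ k < k + m + 1 then
        (k : ℝ) * ((k + m + 1 : ℕ) : ℝ) * |γ k * γ (k + m + 1)| * β0 ^ (k + (k + m + 1) - 2)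
          * (((1 - p) ^ (k - 1))⁻¹ - 1)
      else 0)
    ≤ p * ((c ^ 2 * ((k : ℝ) ^ 3 + (k : ℝ) ^ 2) * s ^ (k - 1))
        * (((m : ℝ) + 1) * β0 ^ (m + 1))) := by
  have h1p : 0 < 1 - p := by linarith
  have hq0 : 0 < β0 ^ 2 / (1 - p) := by positivity
  have hs0 : 0 < s := lt_of_lt_of_le hq0 hs
  split_ifs with hk
  · obtain ⟨hk1, -⟩ := hk
    have hδ := delta_le hp1 (k - 1)
    have hδ0 := delta_nonneg hp0.le hp1 (k - 1)
    have hkc : ((k - 1 : ℕ) : ℝ) ≤ (k : ℝ) := by exact_mod_cast Nat.sub_le k 1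
    have hδ' : ((1 - p) ^ (k - 1))⁻¹ - 1 ≤ (k : ℝ) * p * ((1 - p) ^ (k - 1))⁻¹ :=
      le_trans hδ (by
        apply mul_le_mul_of_nonneg_right _ (by positivity)
        exact mul_le_mul_of_nonneg_right hkc hp0.le)
    have hγ2 : |γ k * γ (k + m + 1)| ≤ c ^ 2 := by
      rw [abs_mul, sq]
      exact mul_le_mul (hγ k) (hγ _) (abs_nonneg _) hc
    have hexp : β0 ^ (k + (k + m + 1) - 2) = β0 ^ (2 * k - 2) * β0 ^ (m + 1) := by
      rw [← pow_add]
      congr 1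
      omega
    calc (k : ℝ) * ((k + m + 1 : ℕ) : ℝ) * |γ k * γ (k + m + 1)| * β0 ^ (k + (k + m + 1) - 2)
          * (((1 - p) ^ (k - 1))⁻¹ - 1)
        ≤ (k : ℝ) * ((k + m + 1 : ℕ) : ℝ) * c ^ 2 * β0 ^ (k + (k + m + 1) - 2)
          * ((k : ℝ) * p * ((1 - p) ^ (k - 1))⁻¹) := by
          gcongr <;> positivity
      _ = p * (c ^ 2 * ((k : ℝ) ^ 2 * ((k : ℝ) + (m : ℝ) + 1))
            * (β0 ^ 2 / (1 - p)) ^ (k - 1) * β0 ^ (m + 1)) := by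
          rw [hexp, ← key_pow β0 p k]; push_cast; ring
      _ ≤ p * (c ^ 2 * (((k : ℝ) ^ 3 + (k : ℝ) ^ 2) * ((m : ℝ) + 1))
            * (β0 ^ 2 / (1 - p)) ^ (k - 1) * β0 ^ (m + 1)) := by
          have hkm : (k : ℝ) ^ 2 * ((k : ℝ) + (m : ℝ) + 1)
              ≤ ((k : ℝ) ^ 3 + (k : ℝ) ^ 2) * ((m : ℝ) + 1) := by
            have hk' : (1 : ℝ) ≤ (k : ℝ) := by exact_mod_cast hk1
            have hm' : (0 : ℝ) ≤ (m : ℝ) := Nat.cast_nonneg m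
            nlinarith [mul_nonneg (by positivity : (0:ℝ) ≤ (k:ℝ)^3) hm']
          gcongr
      _ ≤ p * (c ^ 2 * (((k : ℝ) ^ 3 + (k : ℝ) ^ 2) * ((m : ℝ) + 1))
            * s ^ (k - 1) * β0 ^ (m + 1)) := by
          have := pow_le_pow_left₀ hq0.le hs (k - 1)
          gcongr
      _ = p * ((c ^ 2 * ((k : ℝ) ^ 3 + (k : ℝ) ^ 2) * s ^ (k - 1))
            * (((m : ℝ) + 1) * β0 ^ (m + 1))) := by ring
  · have hk0 : k = 0 := by omega
    subst hk0
    have : (0 : ℝ) ≤ p * ((c ^ 2 * ((0 : ℝ) ^ 3 + (0 : ℝ) ^ 2) * s ^ (0 - 1))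
        * (((m : ℝ) + 1) * β0 ^ (m + 1))) := by positivity
    simpa using this

set_option maxHeartbeats 1000000 in
/-- the variance-of-conditional-expectation bound for the gradient
sum estimator is finite for p ∈ (0, 1-β₀²) and is O(p) as p → 0. -/
theorem stmt19 (β0 c : ℝ) (γ : ℕ → ℝ) (hβ0 : 0 < β0) (hβ01 : β0 < 1) (hc : 0 < c)
    (hγ : ∀ k, |γ k| ≤ c) :
    (∀ p ∈ Set.Ioo (0 : ℝ) (1 - β0 ^ 2),
      Summable (fun k : ℕ =>
        if 1 ≤ k then
          (k : ℝ) ^ 2 * (γ k) ^ 2 * β0 ^ (2 * k - 2) * (((1 - p) ^ (k - 1))⁻¹ - 1)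
        else 0) ∧
      Summable (fun kl : ℕ × ℕ =>
        if 1 ≤ kl.1 ∧ kl.1 < kl.2 then
          (kl.1 : ℝ) * (kl.2 : ℝ) * |γ kl.1 * γ kl.2| * β0 ^ (kl.1 + kl.2 - 2)
            * (((1 - p) ^ (kl.1 - 1))⁻¹ - 1)
        else 0)) ∧
    (fun p : ℝ =>
        (∑' k : ℕ,
          if 1 ≤ k then
            (k : ℝ) ^ 2 * (γ k) ^ 2 * β0 ^ (2 * k - 2) * (((1 - p) ^ (k - 1))⁻¹ - 1)
          else 0)
        + 2 * ∑' kl : ℕ × ℕ,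
            (if 1 ≤ kl.1 ∧ kl.1 < kl.2 then
              (kl.1 : ℝ) * (kl.2 : ℝ) * |γ kl.1 * γ kl.2| * β0 ^ (kl.1 + kl.2 - 2)
                * (((1 - p) ^ (kl.1 - 1))⁻¹ - 1)
            else 0))
      =O[nhdsWithin 0 (Set.Ioo (0 : ℝ) (1 - β0 ^ 2))] (fun p => p) := by
  have hβsq : β0 ^ 2 < 1 := by nlinarith
  set e : ℕ × ℕ → ℕ × ℕ := fun km => (km.1, km.1 + km.2 + 1) with he
  have einj : Function.Injective e := by
    rintro ⟨a, b⟩ ⟨a', b'⟩ h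
    simp only [he, Prod.mk.injEq] at h
    exact Prod.ext h.1 (by omega)
  -- the master fact, for each p and each s ≥ q
  have main : ∀ p ∈ Set.Ioo (0 : ℝ) (1 - β0 ^ 2), ∀ s : ℝ, β0 ^ 2 / (1 - p) ≤ s → s < 1 →
      (Summable (fun k : ℕ =>
        if 1 ≤ k then
          (k : ℝ) ^ 2 * (γ k) ^ 2 * β0 ^ (2 * k - 2) * (((1 - p) ^ (k - 1))⁻¹ - 1)
        else 0) ∧
      Summable (fun kl : ℕ × ℕ =>
        if 1 ≤ kl.1 ∧ kl.1 < kl.2 then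
          (kl.1 : ℝ) * (kl.2 : ℝ) * |γ kl.1 * γ kl.2| * β0 ^ (kl.1 + kl.2 - 2)
            * (((1 - p) ^ (kl.1 - 1))⁻¹ - 1)
        else 0)) ∧
      (∑' k : ℕ,
          if 1 ≤ k then
            (k : ℝ) ^ 2 * (γ k) ^ 2 * β0 ^ (2 * k - 2) * (((1 - p) ^ (k - 1))⁻¹ - 1)
          else 0)
        ≤ p * ∑' k : ℕ, c ^ 2 * ((k : ℝ) ^ 3 * s ^ (k - 1)) ∧
      (∑' kl : ℕ × ℕ,
            (if 1 ≤ kl.1 ∧ kl.1 < kl.2 then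
              (kl.1 : ℝ) * (kl.2 : ℝ) * |γ kl.1 * γ kl.2| * β0 ^ (kl.1 + kl.2 - 2)
                * (((1 - p) ^ (kl.1 - 1))⁻¹ - 1)
            else 0))
        ≤ p * ∑' km : ℕ × ℕ, (c ^ 2 * ((km.1 : ℝ) ^ 3 + (km.1 : ℝ) ^ 2) * s ^ (km.1 - 1))
            * (((km.2 : ℝ) + 1) * β0 ^ (km.2 + 1)) := by
    rintro p ⟨hp0, hpu⟩ s hqs hs1
    have hp1 : p < 1 := by nlinarith
    have h1p : 0 < 1 - p := by linarith
    have hq0 : 0 < β0 ^ 2 / (1 - p) := by positivity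
    have hs0 : 0 < s := lt_of_lt_of_le hq0 hqs
    set T1 : ℕ → ℝ := fun k =>
      if 1 ≤ k then
        (k : ℝ) ^ 2 * (γ k) ^ 2 * β0 ^ (2 * k - 2) * (((1 - p) ^ (k - 1))⁻¹ - 1)
      else 0 with hT1
    set T2 : ℕ × ℕ → ℝ := fun kl =>
      if 1 ≤ kl.1 ∧ kl.1 < kl.2 then
        (kl.1 : ℝ) * (kl.2 : ℝ) * |γ kl.1 * γ kl.2| * β0 ^ (kl.1 + kl.2 - 2)
          * (((1 - p) ^ (kl.1 - 1))⁻¹ - 1)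
      else 0 with hT2
    have hT1nn : ∀ k, 0 ≤ T1 k := by
      intro k
      rw [hT1]
      dsimp only
      split_ifs with h
      · exact mul_nonneg (by positivity) (delta_nonneg hp0.le hp1 _)
      · exact le_refl 0
    have hT2nn : ∀ kl, 0 ≤ T2 kl := by
      intro kl
      rw [hT2]
      dsimp only
      split_ifs with h
      · exact mul_nonneg (by positivity) (delta_nonneg hp0.le hp1 _)
      · exact le_refl 0
    -- majorants
    have Sf1 : Summable (fun k : ℕ => p * (c ^ 2 * ((k : ℝ) ^ 3 * s ^ (k - 1)))) :=
      (((geoS hs0 hs1 3).mul_left (c ^ 2)).mul_left p)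
    have hT1le : ∀ k, T1 k ≤ p * (c ^ 2 * ((k : ℝ) ^ 3 * s ^ (k - 1))) :=
      fun k => bnd1 hβ0 hc.le hγ hp0 hp1 hqs k
    have ST1 : Summable T1 := Sf1.of_nonneg_of_le hT1nn hT1le
    have htsum1 : ∑' k, T1 k ≤ p * ∑' k : ℕ, c ^ 2 * ((k : ℝ) ^ 3 * s ^ (k - 1)) := by
      calc ∑' k, T1 k ≤ ∑' k : ℕ, p * (c ^ 2 * ((k : ℝ) ^ 3 * s ^ (k - 1))) :=
            ST1.tsum_le_tsum hT1le Sf1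
        _ = _ := tsum_mul_left
    -- double sum
    have Sf' : Summable (fun k : ℕ => c ^ 2 * ((k : ℝ) ^ 3 + (k : ℝ) ^ 2) * s ^ (k - 1)) := by
      apply Summable.congr (((geoS hs0 hs1 3).add (geoS hs0 hs1 2)).mul_left (c ^ 2))
      intro k; ring
    have Sg : Summable (fun m : ℕ => ((m : ℝ) + 1) * β0 ^ (m + 1)) := by
      have h1 : Summable (fun m : ℕ => ((m : ℝ) * β0 ^ m + β0 ^ m) * β0) :=
        ((summable_pow_mul_geometric_of_norm_lt_one 1
            (by rw [Real.norm_eq_abs, abs_of_pos hβ0]; exact hβ01)).congr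
              (fun m => by rw [pow_one]) |>.add
          (summable_geometric_of_lt_one hβ0.le hβ01)).mul_right β0
      apply Summable.congr h1
      intro m; rw [pow_succ]; ring
    have hf'nn : 0 ≤ (fun k : ℕ => c ^ 2 * ((k : ℝ) ^ 3 + (k : ℝ) ^ 2) * s ^ (k - 1)) :=
      fun k => by positivity
    have hgnn : 0 ≤ (fun m : ℕ => ((m : ℝ) + 1) * β0 ^ (m + 1)) := fun m => by positivity
    have Sprod : Summable (fun km : ℕ × ℕ =>
        (c ^ 2 * ((km.1 : ℝ) ^ 3 + (km.1 : ℝ) ^ 2) * s ^ (km.1 - 1))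
          * (((km.2 : ℝ) + 1) * β0 ^ (km.2 + 1))) :=
      Sf'.mul_of_nonneg Sg hf'nn hgnn
    have SprodP : Summable (fun km : ℕ × ℕ =>
        p * ((c ^ 2 * ((km.1 : ℝ) ^ 3 + (km.1 : ℝ) ^ 2) * s ^ (km.1 - 1))
          * (((km.2 : ℝ) + 1) * β0 ^ (km.2 + 1)))) := Sprod.mul_left p
    have hT2e_le : ∀ km : ℕ × ℕ, T2 (e km)
        ≤ p * ((c ^ 2 * ((km.1 : ℝ) ^ 3 + (km.1 : ℝ) ^ 2) * s ^ (km.1 - 1))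
          * (((km.2 : ℝ) + 1) * β0 ^ (km.2 + 1))) := by
      rintro ⟨k, m⟩
      exact bnd2 hβ0 hc.le hγ hp0 hp1 hqs k m
    have ST2e : Summable (fun km => T2 (e km)) :=
      SprodP.of_nonneg_of_le (fun km => hT2nn _) hT2e_le
    have hrange : ∀ x : ℕ × ℕ, x ∉ Set.range e → T2 x = 0 := by
      rintro ⟨a, b⟩ hx
      rw [hT2]
      dsimp only
      rw [if_neg]
      rintro ⟨-, hab⟩
      exact hx ⟨(a, b - a - 1), by simp only [he]; exact Prod.ext rfl (by omega)⟩
    have ST2 : Summable T2 := (einj.summable_iff hrange).1 ST2e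
    have hsupp : Function.support T2 ⊆ Set.range e := by
      rintro ⟨a, b⟩ hx
      by_contra hno
      exact hx (hrange (a, b) hno)
    have htsum2 : ∑' kl, T2 kl
        ≤ p * ∑' km : ℕ × ℕ, (c ^ 2 * ((km.1 : ℝ) ^ 3 + (km.1 : ℝ) ^ 2) * s ^ (km.1 - 1))
            * (((km.2 : ℝ) + 1) * β0 ^ (km.2 + 1)) := by
      rw [← einj.tsum_eq hsupp]
      calc ∑' km, T2 (e km)
          ≤ ∑' km : ℕ × ℕ, p * ((c ^ 2 * ((km.1 : ℝ) ^ 3 + (km.1 : ℝ) ^ 2) * s ^ (km.1 - 1))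
              * (((km.2 : ℝ) + 1) * β0 ^ (km.2 + 1))) := ST2e.tsum_le_tsum hT2e_le SprodP
        _ = _ := tsum_mul_left
    exact ⟨⟨ST1, ST2⟩, htsum1, htsum2⟩
  constructor
  · intro p hp
    have h1p : 0 < 1 - p := by
      have := hp.2; simp only [Set.mem_Ioo] at hp; nlinarith [hp.1, hp.2]
    have hq1 : β0 ^ 2 / (1 - p) < 1 := by
      rw [div_lt_one h1p]
      have := hp.2
      simp only [Set.mem_Ioo] at hp
      linarith [hp.2]
    exact (main p hp (β0 ^ 2 / (1 - p)) le_rfl hq1).1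
  · -- Big-O part
    set p₀ : ℝ := (1 - β0 ^ 2) / 2 with hp₀def
    have hp₀pos : 0 < p₀ := by rw [hp₀def]; linarith
    have h1p₀ : 0 < 1 - p₀ := by rw [hp₀def]; nlinarith
    set r : ℝ := β0 ^ 2 / (1 - p₀) with hrdef
    have hr0 : 0 < r := by positivity
    have hr1 : r < 1 := by
      rw [hrdef, div_lt_one h1p₀, hp₀def]
      nlinarith
    set C1 : ℝ := ∑' k : ℕ, c ^ 2 * ((k : ℝ) ^ 3 * r ^ (k - 1)) with hC1
    set C2 : ℝ := ∑' km : ℕ × ℕ, (c ^ 2 * ((km.1 : ℝ) ^ 3 + (km.1 : ℝ) ^ 2) * r ^ (km.1 - 1))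
        * (((km.2 : ℝ) + 1) * β0 ^ (km.2 + 1)) with hC2
    rw [Asymptotics.isBigO_iff]
    refine ⟨C1 + 2 * C2, ?_⟩
    filter_upwards [self_mem_nhdsWithin,
      mem_nhdsWithin_of_mem_nhds (Iio_mem_nhds hp₀pos)] with p hpS hpp₀
    simp only [Set.mem_Ioo] at hpS
    simp only [Set.mem_Iio] at hpp₀
    obtain ⟨hp0, hpu⟩ := hpS
    have hp1 : p < 1 := by nlinarith
    have h1p : 0 < 1 - p := by linarith
    have hqr : β0 ^ 2 / (1 - p) ≤ r := by
      rw [hrdef, div_le_div_iff₀ h1p h1p₀]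
      nlinarith [sq_nonneg β0]
    obtain ⟨⟨ST1, ST2⟩, b1, b2⟩ := main p ⟨hp0, hpu⟩ r hqr hr1
    have hT1nn : ∀ k : ℕ, (0:ℝ) ≤
        (if 1 ≤ k then
          (k : ℝ) ^ 2 * (γ k) ^ 2 * β0 ^ (2 * k - 2) * (((1 - p) ^ (k - 1))⁻¹ - 1)
        else 0) := by
      intro k
      split_ifs with h
      · exact mul_nonneg (by positivity) (delta_nonneg hp0.le hp1 _)
      · exact le_refl 0
    have hT2nn : ∀ kl : ℕ × ℕ, (0:ℝ) ≤
        (if 1 ≤ kl.1 ∧ kl.1 < kl.2 then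
          (kl.1 : ℝ) * (kl.2 : ℝ) * |γ kl.1 * γ kl.2| * β0 ^ (kl.1 + kl.2 - 2)
            * (((1 - p) ^ (kl.1 - 1))⁻¹ - 1)
        else 0) := by
      intro kl
      split_ifs with h
      · exact mul_nonneg (by positivity) (delta_nonneg hp0.le hp1 _)
      · exact le_refl 0
    have ht1nn : (0:ℝ) ≤ ∑' k : ℕ,
        (if 1 ≤ k then
          (k : ℝ) ^ 2 * (γ k) ^ 2 * β0 ^ (2 * k - 2) * (((1 - p) ^ (k - 1))⁻¹ - 1)
        else 0) := tsum_nonneg hT1nn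
    have ht2nn : (0:ℝ) ≤ ∑' kl : ℕ × ℕ,
        (if 1 ≤ kl.1 ∧ kl.1 < kl.2 then
          (kl.1 : ℝ) * (kl.2 : ℝ) * |γ kl.1 * γ kl.2| * β0 ^ (kl.1 + kl.2 - 2)
            * (((1 - p) ^ (kl.1 - 1))⁻¹ - 1)
        else 0) := tsum_nonneg hT2nn
    rw [Real.norm_eq_abs, Real.norm_eq_abs, abs_of_nonneg (by linarith), abs_of_nonneg hp0.le]
    calc _ ≤ p * C1 + 2 * (p * C2) := by rw [← hC1] at b1; rw [← hC2] at b2; linarith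
      _ = (C1 + 2 * C2) * p := by ring
end
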